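/- arXiv:2306.07022 — 5 statements merged into one kernel-verified Lean document; each statement's English description precedes it below -/
import Mathlib

section
/- Let μ₁, μ₂ ∈ M₊(𝕋). The Dirichlet-type space D(μ₁,μ₂) is complete: if (f_n) is a sequence in D(μ₁,μ₂) with ‖f_n − f_m‖_{D(μ₁,μ₂)} → 0 as n, m → ∞, then there exists f ∈ D(μ₁,μ₂) such that ‖f_n − f‖_{D(μ₁,μ₂)} → 0 as n → ∞. -/
open MeasureTheory Complex Set
open scoped ENNReal Real NNReal

noncomputable section

/-- Normalized arc-length measure on the unit circle, parametrized by `θ ∈ (0, 2π]`. -/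
def mT : Measure ℝ :=
  (ENNReal.ofReal (2 * Real.pi))⁻¹ • (volume.restrict (Set.Ioc (0:ℝ) (2 * Real.pi)))

/-- Normalized area measure on the open unit disc. -/
def mA : Measure ℂ := (ENNReal.ofReal Real.pi)⁻¹ • (volume.restrict (Metric.ball (0:ℂ) 1))

/-- The open unit bidisc. -/
def bidisc : Set (ℂ × ℂ) := {z : ℂ × ℂ | ‖z.1‖ < 1 ∧ ‖z.2‖ < 1}

/-- The Poisson integral of a finite positive Borel measure on the unit circle. -/
def poissonR (μ : Measure (Metric.sphere (0:ℂ) 1)) (w : ℂ) : ℝ :=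
  ∫ ζ, (1 - ‖w‖ ^ 2) / ‖w - (ζ : ℂ)‖ ^ 2 ∂μ

/-- Partial derivative in the first variable. -/
def d1 (f : ℂ × ℂ → ℂ) (z : ℂ × ℂ) : ℂ := deriv (fun w => f (w, z.2)) z.1

/-- Partial derivative in the second variable. -/
def d2 (f : ℂ × ℂ → ℂ) (z : ℂ × ℂ) : ℂ := deriv (fun w => f (z.1, w)) z.2

/-- The Dirichlet integral `D_{μ₁,μ₂}(f)` of a function on the bidisc. -/
def Dint (μ₁ μ₂ : Measure (Metric.sphere (0:ℂ) 1)) (f : ℂ × ℂ → ℂ) : ℝ≥0∞ :=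
  (⨆ r ∈ Set.Ioo (0:ℝ) 1, ∫⁻ θ, (∫⁻ z₁,
      ENNReal.ofReal (‖d1 f (z₁, (r:ℂ) * Complex.exp ((θ:ℂ) * Complex.I))‖ ^ 2
        * poissonR μ₁ z₁) ∂mA) ∂mT)
  + (⨆ r ∈ Set.Ioo (0:ℝ) 1, ∫⁻ θ, (∫⁻ z₂,
      ENNReal.ofReal (‖d2 f ((r:ℂ) * Complex.exp ((θ:ℂ) * Complex.I), z₂)‖ ^ 2
        * poissonR μ₂ z₂) ∂mA) ∂mT)

/-- The squared Hardy norm `‖f‖²_{H²(𝔻²)}`, via suprema of means over tori. -/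
def H2norm2 (f : ℂ × ℂ → ℂ) : ℝ≥0∞ :=
  ⨆ r ∈ Set.Ioo (0:ℝ) 1, ∫⁻ θ₁, (∫⁻ θ₂,
    ENNReal.ofReal (‖f ((r:ℂ) * Complex.exp ((θ₁:ℂ) * Complex.I),
      (r:ℂ) * Complex.exp ((θ₂:ℂ) * Complex.I))‖ ^ 2) ∂mT) ∂mT

/-- Membership in the Dirichlet-type space `D(μ₁, μ₂)`. -/
def MemD (μ₁ μ₂ : Measure (Metric.sphere (0:ℂ) 1)) (f : ℂ × ℂ → ℂ) : Prop :=
  DifferentiableOn ℂ f bidisc ∧ H2norm2 f < ⊤ ∧ Dint μ₁ μ₂ f < ⊤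

/-- The squared norm of the Dirichlet-type space `D(μ₁, μ₂)`. -/
def Dnorm2 (μ₁ μ₂ : Measure (Metric.sphere (0:ℂ) 1)) (f : ℂ × ℂ → ℂ) : ℝ≥0∞ :=
  H2norm2 f + Dint μ₁ μ₂ f

/-!
Cauchy's formula in each variable, followed by Cauchy–Schwarz on the torus, bounds `|h z|` on the
polydisc of radius `s` by `(r / (r - s))² ‖h‖_{H²}` for any `s < r < 1`. Hence a Cauchy sequence in
`D(μ₁, μ₂)` converges locally uniformly on the bidisc to some `g`, which is holomorphic, and the
Cauchy estimates make the partial derivatives converge as well. Each of the three terms of the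
norm is a supremum over `r` of integrals of squared moduli, so Fatou's lemma gives
`‖f n - g‖² ≤ liminf_m ‖f n - f m‖²`, which is small for large `n`; finally
`‖g‖² ≤ 2 ‖f N‖² + 2 ‖f N - g‖²` puts `g` in `D(μ₁, μ₂)`.
-/

open Filter Topology Metric

instance : IsProbabilityMeasure mT := by
  refine ⟨?_⟩
  rw [mT, Measure.smul_apply, Measure.restrict_apply_univ, Real.volume_Ioc, sub_zero, smul_eq_mul,
    ENNReal.inv_mul_cancel (by positivity) ENNReal.ofReal_ne_top]

instance : SFinite mA := by
  unfold mA; infer_instance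

lemma bidisc_eq_ball : bidisc = ball (0 : ℂ × ℂ) 1 := by
  ext z
  simp [bidisc, Prod.norm_def]

lemma isOpen_bidisc : IsOpen bidisc := bidisc_eq_ball ▸ isOpen_ball

lemma swap_mem_bidisc {z : ℂ × ℂ} (hz : z ∈ bidisc) : z.swap ∈ bidisc := ⟨hz.2, hz.1⟩

lemma norm_ofReal_mul_exp {r : ℝ} (hr : 0 ≤ r) (θ : ℝ) :
    ‖(r : ℂ) * exp ((θ : ℂ) * I)‖ = r := by
  rw [norm_mul, norm_exp_ofReal_mul_I, mul_one, norm_real, Real.norm_of_nonneg hr]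

lemma norm_ofReal_mul_exp_lt_one {r : ℝ} (hr : r ∈ Ioo (0:ℝ) 1) (θ : ℝ) :
    ‖(r : ℂ) * exp ((θ : ℂ) * I)‖ < 1 := by
  rw [norm_ofReal_mul_exp hr.1.le]; exact hr.2

lemma ContinuousOn.continuous_torus {h : ℂ × ℂ → ℂ} (hh : ContinuousOn h bidisc) {r : ℝ}
    (hr : r ∈ Ioo (0:ℝ) 1) :
    Continuous (Function.uncurry fun θ₁ θ₂ : ℝ => h (r * exp (θ₁ * I), r * exp (θ₂ * I))) :=
  hh.comp_continuous (by fun_prop) fun p =>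
    ⟨norm_ofReal_mul_exp_lt_one hr p.1, norm_ofReal_mul_exp_lt_one hr p.2⟩

lemma ae_mem_ball_mA : ∀ᵐ w ∂mA, w ∈ ball (0 : ℂ) 1 :=
  Measure.ae_smul_measure (ae_restrict_mem measurableSet_ball) _

lemma ae_mem_ball_prod_mA : ∀ᵐ p ∂(mT.prod mA), p.2 ∈ ball (0 : ℂ) 1 :=
  Measure.quasiMeasurePreserving_snd.ae ae_mem_ball_mA

lemma ENNReal.liminf_add_liminf_le (u v : ℕ → ℝ≥0∞) :
    liminf u atTop + liminf v atTop ≤ liminf (fun n => u n + v n) atTop := by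
  have hmono : ∀ w : ℕ → ℝ≥0∞, Monotone fun n => ⨅ i ≥ n, w i :=
    fun w a b hab => biInf_mono fun i hi => hab.trans hi
  simp only [liminf_eq_iSup_iInf_of_nat, ENNReal.iSup_add_iSup_of_monotone (hmono u) (hmono v)]
  exact iSup_mono fun n => le_iInf₂ fun i hi => add_le_add (iInf₂_le i hi) (iInf₂_le i hi)

lemma sq_lintegral_le_lintegral_sq {α : Type*} [MeasurableSpace α] {μ : Measure α}
    [IsProbabilityMeasure μ] {F : α → ℝ≥0∞} (hF : AEMeasurable F μ) :
    (∫⁻ a, F a ∂μ) ^ 2 ≤ ∫⁻ a, F a ^ 2 ∂μ := by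
  have h := ENNReal.lintegral_mul_le_Lp_mul_Lq μ Real.HolderConjugate.two_two hF
    (aemeasurable_const (b := 1))
  simp only [Pi.mul_apply, mul_one, one_pow, ENNReal.one_rpow, lintegral_const, measure_univ,
    ENNReal.rpow_two] at h
  calc (∫⁻ a, F a ∂μ) ^ 2 ≤ ((∫⁻ a, F a ^ 2 ∂μ) ^ (1 / 2 : ℝ)) ^ (2 : ℝ) := by
        rw [ENNReal.rpow_two]; gcongr
    _ = ∫⁻ a, F a ^ 2 ∂μ := by rw [← ENNReal.rpow_mul]; norm_num

lemma tendstoLocallyUniformlyOn_const {α β ι : Type*} [TopologicalSpace α] [UniformSpace β]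
    (f : α → β) (l : Filter ι) (s : Set α) : TendstoLocallyUniformlyOn (fun _ => f) f l s :=
  fun _ hu _ _ => ⟨univ, univ_mem, Eventually.of_forall fun _ _ _ => refl_mem_uniformity hu⟩

lemma exists_tendstoLocallyUniformlyOn_of_uniformCauchySeqOn {α β ι : Type*} [TopologicalSpace α]
    [LocallyCompactSpace α] [UniformSpace β] [CompleteSpace β] [Nonempty β] {l : Filter ι} [l.NeBot]
    {U : Set α} {F : ι → α → β} (hU : IsOpen U)
    (hF : ∀ K ⊆ U, IsCompact K → UniformCauchySeqOn F l K) :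
    ∃ g, TendstoLocallyUniformlyOn F g l U := by
  have hlim : ∀ x ∈ U, Tendsto (fun i => F i x) l (𝓝 (l.limUnder fun i => F i x)) :=
    fun x hx => tendsto_nhds_limUnder <| cauchy_map_iff_exists_tendsto.1 <|
      (hF {x} (singleton_subset_iff.2 hx) isCompact_singleton).cauchy_map rfl
  refine ⟨fun x => l.limUnder fun i => F i x,
    (tendstoLocallyUniformlyOn_iff_forall_isCompact hU).2 fun K hKU hK => ?_⟩
  exact (hF K hKU hK).tendstoUniformlyOn_of_tendsto fun x hx => hlim x (hKU hx)

lemma aemeasurable_deriv_of_continuousOn {α : Type*} [TopologicalSpace α] [MeasurableSpace α]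
    [OpensMeasurableSpace α] {μ : Measure (α × ℂ)} (hμ : ∀ᵐ p ∂μ, p.2 ∈ ball (0:ℂ) 1)
    {u : α × ℂ → ℂ} (hu : ContinuousOn u (univ ×ˢ ball 0 1))
    (hd : ∀ a, DifferentiableOn ℂ (fun w => u (a, w)) (ball 0 1)) :
    AEMeasurable (fun p => deriv (fun w => u (p.1, w)) p.2) μ := by
  -- the steps shrink with the distance to the circle, so the difference quotients are continuous
  -- on `univ ×ˢ ball 0 1`
  set t : ℕ → ℂ → ℝ := fun k w => (1 - ‖w‖) / (k + 2)
  have ht_pos : ∀ k, ∀ w ∈ ball (0:ℂ) 1, 0 < t k w := fun k w hw =>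
    div_pos (sub_pos.2 (mem_ball_zero_iff.1 hw)) (by positivity)
  have ht_mem : ∀ k, ∀ w ∈ ball (0:ℂ) 1, w + t k w ∈ ball (0:ℂ) 1 := fun k w hw => by
    have hw' := mem_ball_zero_iff.1 hw
    have : t k w ≤ (1 - ‖w‖) / 2 := div_le_div_of_nonneg_left (by linarith) two_pos (by linarith)
    rw [mem_ball_zero_iff]
    calc ‖w + t k w‖ ≤ ‖w‖ + t k w := by
          simpa [abs_of_pos (ht_pos k w hw)] using norm_add_le w (t k w : ℂ)
      _ < 1 := by linarith
  have hS : μ.restrict (univ ×ˢ ball 0 1) = μ :=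
    Measure.restrict_eq_self_of_ae_mem (hμ.mono fun p hp => ⟨trivial, hp⟩)
  have hQ : ∀ k, AEMeasurable (fun p : α × ℂ => (u (p.1, p.2 + t k p.2) - u p) / t k p.2) μ := by
    intro k
    rw [← hS]
    refine ContinuousOn.aemeasurable ?_ (MeasurableSet.univ.prod measurableSet_ball)
    refine ((hu.comp (by fun_prop) fun p hp => ⟨trivial, ht_mem k _ hp.2⟩).sub hu).div
      (by fun_prop) fun p hp => ?_
    exact Complex.ofReal_ne_zero.2 (ht_pos k _ hp.2).ne'
  refine aemeasurable_of_tendsto_metrizable_ae' hQ (hμ.mono fun p hp => ?_)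
  have hder := ((hd p.1).differentiableAt (isOpen_ball.mem_nhds hp)).hasDerivAt
  rw [hasDerivAt_iff_tendsto_slope] at hder
  have ht0 : Tendsto (fun k : ℕ => ((t k p.2 : ℝ) : ℂ)) atTop (𝓝 0) := by
    have : Tendsto (fun k : ℕ => (1 - ‖p.2‖) / ((k : ℝ) + 2)) atTop (𝓝 0) :=
      tendsto_const_nhds.div_atTop (tendsto_atTop_add_const_right _ 2 tendsto_natCast_atTop_atTop)
    simpa [t, Function.comp_def] using (continuous_ofReal.tendsto 0).comp this
  have hseq : Tendsto (fun k : ℕ => p.2 + t k p.2) atTop (𝓝[≠] p.2) :=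
    tendsto_nhdsWithin_iff.2 ⟨by simpa using tendsto_const_nhds.add ht0,
      Eventually.of_forall fun k => by simpa using (ht_pos k p.2 hp).ne'⟩
  exact (hder.comp hseq).congr fun k => by simp [slope_def_field]

/-! ## Suprema over radii of weighted square integrals -/

section SqIntegralSup

variable {β : Type*} [MeasurableSpace β] {ν : Measure β} {w : β → ℝ}

def sqIntegralSup (ν : Measure β) (w : β → ℝ) (u : ℝ → ℝ → β → ℂ) : ℝ≥0∞ :=
  ⨆ r ∈ Ioo (0:ℝ) 1, ∫⁻ θ, ∫⁻ y, ENNReal.ofReal (‖u r θ y‖ ^ 2 * w y) ∂ν ∂mT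

lemma lintegral_le_sqIntegralSup (u : ℝ → ℝ → β → ℂ) {r : ℝ} (hr : r ∈ Ioo (0:ℝ) 1) :
    ∫⁻ θ, ∫⁻ y, ENNReal.ofReal (‖u r θ y‖ ^ 2 * w y) ∂ν ∂mT ≤ sqIntegralSup ν w u :=
  le_biSup (fun r => ∫⁻ θ, ∫⁻ y, ENNReal.ofReal (‖u r θ y‖ ^ 2 * w y) ∂ν ∂mT) hr

lemma AEMeasurable.ofReal_norm_sq_mul {α : Type*} [MeasurableSpace α] {μ : Measure (α × β)}
    (hw : Measurable w) {F : α × β → ℂ} (hF : AEMeasurable F μ) :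
    AEMeasurable (fun p => ENNReal.ofReal (‖F p‖ ^ 2 * w p.2)) μ :=
  ENNReal.measurable_ofReal.comp_aemeasurable
    ((hF.norm.pow_const 2).mul (hw.comp measurable_snd).aemeasurable)

variable [SFinite ν]

lemma lintegral_lintegral_eq_lintegral_prod (hw : Measurable w) {u : ℝ → β → ℂ}
    (hu : AEMeasurable (Function.uncurry u) (mT.prod ν)) :
    ∫⁻ θ, ∫⁻ y, ENNReal.ofReal (‖u θ y‖ ^ 2 * w y) ∂ν ∂mT =
      ∫⁻ p, ENNReal.ofReal (‖Function.uncurry u p‖ ^ 2 * w p.2) ∂(mT.prod ν) :=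
  (lintegral_prod _ (hu.ofReal_norm_sq_mul hw)).symm

lemma sqIntegralSup_le_liminf (hw : Measurable w) {u : ℕ → ℝ → ℝ → β → ℂ} {v : ℝ → ℝ → β → ℂ}
    (hu : ∀ n, ∀ r ∈ Ioo (0:ℝ) 1, AEMeasurable (Function.uncurry (u n r)) (mT.prod ν))
    (huv : ∀ r ∈ Ioo (0:ℝ) 1, ∀ᵐ p ∂(mT.prod ν),
      Tendsto (fun n => Function.uncurry (u n r) p) atTop (𝓝 (Function.uncurry (v r) p))) :
    sqIntegralSup ν w v ≤ liminf (fun n => sqIntegralSup ν w (u n)) atTop := by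
  refine iSup₂_le fun r hr => ?_
  have hv := aemeasurable_of_tendsto_metrizable_ae' (fun n => hu n r hr) (huv r hr)
  have hcont : ∀ c : ℝ, Continuous fun x : ℂ => ENNReal.ofReal (‖x‖ ^ 2 * c) :=
    fun c => ENNReal.continuous_ofReal.comp (by fun_prop)
  calc ∫⁻ θ, ∫⁻ y, ENNReal.ofReal (‖v r θ y‖ ^ 2 * w y) ∂ν ∂mT
      = ∫⁻ p, liminf (fun n => ENNReal.ofReal (‖Function.uncurry (u n r) p‖ ^ 2 * w p.2)) atTop
          ∂(mT.prod ν) := by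
        rw [lintegral_lintegral_eq_lintegral_prod hw hv]
        exact lintegral_congr_ae <| (huv r hr).mono fun p hp =>
          (((hcont _).tendsto _).comp hp).liminf_eq.symm
    _ ≤ liminf (fun n => ∫⁻ p, ENNReal.ofReal (‖Function.uncurry (u n r) p‖ ^ 2 * w p.2)
          ∂(mT.prod ν)) atTop :=
        lintegral_liminf_le' fun n => (hu n r hr).ofReal_norm_sq_mul hw
    _ ≤ liminf (fun n => sqIntegralSup ν w (u n)) atTop := by
        refine liminf_le_liminf (Eventually.of_forall fun n => ?_)
        rw [← lintegral_lintegral_eq_lintegral_prod hw (hu n r hr)]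
        exact lintegral_le_sqIntegralSup (u n) hr

lemma ofReal_sq_mul_le_of_le_add {a b b' c : ℝ} (hab : a ≤ b + b') (ha : 0 ≤ a) (hc : 0 ≤ c) :
    ENNReal.ofReal (a ^ 2 * c) ≤
      2 * ENNReal.ofReal (b ^ 2 * c) + 2 * ENNReal.ofReal (b' ^ 2 * c) := by
  have hsq : a ^ 2 ≤ 2 * b ^ 2 + 2 * b' ^ 2 := by nlinarith [sq_nonneg (b - b')]
  rw [← ENNReal.ofReal_ofNat 2, ← ENNReal.ofReal_mul zero_le_two, ← ENNReal.ofReal_mul zero_le_two,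
    ← ENNReal.ofReal_add (by positivity) (by positivity)]
  exact ENNReal.ofReal_le_ofReal (by nlinarith)

lemma sqIntegralSup_le_two_mul_add (hw : Measurable w) (hw0 : ∀ᵐ y ∂ν, 0 ≤ w y)
    {u v v' : ℝ → ℝ → β → ℂ}
    (hu : ∀ r ∈ Ioo (0:ℝ) 1, AEMeasurable (Function.uncurry (u r)) (mT.prod ν))
    (hv : ∀ r ∈ Ioo (0:ℝ) 1, AEMeasurable (Function.uncurry (v r)) (mT.prod ν))
    (hv' : ∀ r ∈ Ioo (0:ℝ) 1, AEMeasurable (Function.uncurry (v' r)) (mT.prod ν))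
    (hle : ∀ r ∈ Ioo (0:ℝ) 1, ∀ᵐ p ∂(mT.prod ν),
      ‖Function.uncurry (u r) p‖ ≤ ‖Function.uncurry (v r) p‖ + ‖Function.uncurry (v' r) p‖) :
    sqIntegralSup ν w u ≤ 2 * sqIntegralSup ν w v + 2 * sqIntegralSup ν w v' := by
  refine iSup₂_le fun r hr => ?_
  have hw0' : ∀ᵐ p ∂(mT.prod ν), 0 ≤ w p.2 := Measure.quasiMeasurePreserving_snd.ae hw0
  rw [lintegral_lintegral_eq_lintegral_prod hw (hu r hr)]
  calc ∫⁻ p, ENNReal.ofReal (‖Function.uncurry (u r) p‖ ^ 2 * w p.2) ∂(mT.prod ν)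
      ≤ ∫⁻ p, (2 * ENNReal.ofReal (‖Function.uncurry (v r) p‖ ^ 2 * w p.2) +
          2 * ENNReal.ofReal (‖Function.uncurry (v' r) p‖ ^ 2 * w p.2)) ∂(mT.prod ν) :=
        lintegral_mono_ae <| (hle r hr).mp <| hw0'.mono fun _ hw hp =>
          ofReal_sq_mul_le_of_le_add hp (norm_nonneg _) hw
    _ = 2 * ∫⁻ p, ENNReal.ofReal (‖Function.uncurry (v r) p‖ ^ 2 * w p.2) ∂(mT.prod ν) +
          2 * ∫⁻ p, ENNReal.ofReal (‖Function.uncurry (v' r) p‖ ^ 2 * w p.2) ∂(mT.prod ν) := by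
        rw [lintegral_add_left' (((hv r hr).ofReal_norm_sq_mul hw).const_mul 2),
          lintegral_const_mul' _ _ ENNReal.ofNat_ne_top,
          lintegral_const_mul' _ _ ENNReal.ofNat_ne_top]
    _ ≤ 2 * sqIntegralSup ν w v + 2 * sqIntegralSup ν w v' := by
        rw [← lintegral_lintegral_eq_lintegral_prod hw (hv r hr),
          ← lintegral_lintegral_eq_lintegral_prod hw (hv' r hr)]
        gcongr <;> exact lintegral_le_sqIntegralSup _ hr

end SqIntegralSup

/-! ## Partial derivatives and the Weierstrass theorem on the bidisc -/

lemma d2_eq_d1_comp_swap (h : ℂ × ℂ → ℂ) (z : ℂ × ℂ) : d2 h z = d1 (h ∘ Prod.swap) z.swap := rfl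

lemma DifferentiableOn.comp_swap_bidisc {h : ℂ × ℂ → ℂ} (hh : DifferentiableOn ℂ h bidisc) :
    DifferentiableOn ℂ (h ∘ Prod.swap) bidisc :=
  hh.comp (differentiable_snd.prodMk differentiable_fst).differentiableOn fun _ => swap_mem_bidisc

lemma DifferentiableOn.slice_fst {h : ℂ × ℂ → ℂ} (hh : DifferentiableOn ℂ h bidisc)
    {a : ℂ} (ha : ‖a‖ < 1) : DifferentiableOn ℂ (fun w => h (w, a)) (ball 0 1) :=
  hh.comp (differentiable_id.prodMk (differentiable_const a)).differentiableOn fun _ hw =>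
    ⟨mem_ball_zero_iff.1 hw, ha⟩

lemma DifferentiableOn.diffContOnCl_slice {h : ℂ × ℂ → ℂ} (hh : DifferentiableOn ℂ h bidisc)
    {a : ℂ} (ha : ‖a‖ < 1) {r : ℝ} (hr : r < 1) : DiffContOnCl ℂ (fun w => h (w, a)) (ball 0 r) :=
  ((hh.slice_fst ha).mono ((closure_ball_subset_closedBall).trans
    (closedBall_subset_ball hr))).diffContOnCl

lemma d1_eq_fderiv_apply {h : ℂ × ℂ → ℂ} {z : ℂ × ℂ} (hh : DifferentiableAt ℂ h z) :
    d1 h z = fderiv ℂ h z (1, 0) := by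
  have hL : HasDerivAt (fun w : ℂ => (w, z.2)) ((1:ℂ), (0:ℂ)) z.1 :=
    (hasDerivAt_id z.1).prodMk (hasDerivAt_const z.1 z.2)
  exact (hh.hasFDerivAt.comp_hasDerivAt z.1 hL).deriv

lemma d2_eq_fderiv_apply {h : ℂ × ℂ → ℂ} {z : ℂ × ℂ} (hh : DifferentiableAt ℂ h z) :
    d2 h z = fderiv ℂ h z (0, 1) := by
  have hL : HasDerivAt (fun w : ℂ => (z.1, w)) ((0:ℂ), (1:ℂ)) z.2 :=
    (hasDerivAt_const z.2 z.1).prodMk (hasDerivAt_id z.2)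
  exact (hh.hasFDerivAt.comp_hasDerivAt z.2 hL).deriv

lemma d1_sub {h h' : ℂ × ℂ → ℂ} {z : ℂ × ℂ} (hh : DifferentiableAt ℂ h z)
    (hh' : DifferentiableAt ℂ h' z) : d1 (fun z => h z - h' z) z = d1 h z - d1 h' z := by
  rw [d1_eq_fderiv_apply (hh.fun_sub hh'), d1_eq_fderiv_apply hh, d1_eq_fderiv_apply hh',
    fderiv_fun_sub hh hh', sub_apply]

lemma ContinuousLinearMap.opNorm_le_apply_add_apply (T : (ℂ × ℂ) →L[ℂ] ℂ) :
    ‖T‖ ≤ ‖T (1, 0)‖ + ‖T (0, 1)‖ := by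
  refine T.opNorm_le_bound (by positivity) fun v => ?_
  have hv : v = v.1 • ((1:ℂ), (0:ℂ)) + v.2 • ((0:ℂ), (1:ℂ)) := by simp
  calc ‖T v‖ = ‖v.1 • T (1, 0) + v.2 • T (0, 1)‖ := by
        rw [← T.map_smul, ← T.map_smul, ← T.map_add, ← hv]
    _ ≤ ‖v.1‖ * ‖T (1, 0)‖ + ‖v.2‖ * ‖T (0, 1)‖ := (norm_add_le _ _).trans_eq (by
        rw [norm_smul, norm_smul])
    _ ≤ ‖v‖ * ‖T (1, 0)‖ + ‖v‖ * ‖T (0, 1)‖ := by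
        gcongr
        exacts [_root_.norm_fst_le v, _root_.norm_snd_le v]
    _ = (‖T (1, 0)‖ + ‖T (0, 1)‖) * ‖v‖ := by ring

lemma norm_d1_le_of_forall_mem_closedBall {h : ℂ × ℂ → ℂ} {z : ℂ × ℂ} {ρ M : ℝ} (hρ : 0 < ρ)
    (hh : DifferentiableOn ℂ h (closedBall z ρ)) (hM : ∀ w ∈ closedBall z ρ, ‖h w‖ ≤ M) :
    ‖d1 h z‖ ≤ M / ρ := by
  have hmaps : MapsTo (fun w : ℂ => (w, z.2)) (closedBall z.1 ρ) (closedBall z ρ) :=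
    fun w hw => by simpa [Prod.dist_eq, hρ.le] using hw
  refine Complex.norm_deriv_le_of_forall_mem_sphere_norm_le hρ ?_
    fun w hw => hM _ (hmaps (sphere_subset_closedBall hw))
  refine DifferentiableOn.diffContOnCl ?_
  rw [closure_ball _ hρ.ne']
  exact hh.comp ((differentiable_id.prodMk (differentiable_const _)).differentiableOn) hmaps

lemma norm_fderiv_le_of_forall_mem_closedBall {h : ℂ × ℂ → ℂ} {z : ℂ × ℂ} {ρ M : ℝ} (hρ : 0 < ρ)
    (hh : DifferentiableOn ℂ h (closedBall z ρ)) (hM : ∀ w ∈ closedBall z ρ, ‖h w‖ ≤ M) :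
    ‖fderiv ℂ h z‖ ≤ 2 * M / ρ := by
  have hz : DifferentiableAt ℂ h z := hh.differentiableAt (closedBall_mem_nhds z hρ)
  have hswap : DifferentiableOn ℂ (h ∘ Prod.swap) (closedBall z.swap ρ) :=
    hh.comp (differentiable_snd.prodMk differentiable_fst).differentiableOn fun w hw => by
      simpa [Prod.dist_eq, max_comm] using hw
  have h1 : ‖fderiv ℂ h z (1, 0)‖ ≤ M / ρ :=
    d1_eq_fderiv_apply hz ▸ norm_d1_le_of_forall_mem_closedBall hρ hh hM
  have h2 : ‖fderiv ℂ h z (0, 1)‖ ≤ M / ρ := by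
    rw [← d2_eq_fderiv_apply hz, d2_eq_d1_comp_swap]
    exact norm_d1_le_of_forall_mem_closedBall hρ hswap fun w hw =>
      hM w.swap (by simpa [Prod.dist_eq, max_comm] using hw)
  calc ‖fderiv ℂ h z‖ ≤ ‖fderiv ℂ h z (1, 0)‖ + ‖fderiv ℂ h z (0, 1)‖ :=
        (fderiv ℂ h z).opNorm_le_apply_add_apply
    _ ≤ M / ρ + M / ρ := add_le_add h1 h2
    _ = 2 * M / ρ := by ring

namespace TendstoLocallyUniformlyOn

variable {ι : Type*} {l : Filter ι} {U : Set (ℂ × ℂ)} {F : ι → ℂ × ℂ → ℂ} {g : ℂ × ℂ → ℂ}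

lemma uniformCauchySeqOn_fderiv (hFg : TendstoLocallyUniformlyOn F g l U) (hU : IsOpen U)
    (hF : ∀ i, DifferentiableOn ℂ (F i) U) {K : Set (ℂ × ℂ)} (hKU : K ⊆ U) (hK : IsCompact K) :
    UniformCauchySeqOn (fun i => fderiv ℂ (F i)) l K := by
  obtain ⟨δ, hδ, hδU⟩ := hK.exists_cthickening_subset_open hU hKU
  have hUC : UniformCauchySeqOn F l (cthickening δ K) :=
    ((tendstoLocallyUniformlyOn_iff_forall_isCompact hU).1 hFg _ hδU
      hK.cthickening).uniformCauchySeqOn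
  intro u hu
  obtain ⟨ε, hε, hεu⟩ := Metric.mem_uniformity_dist.1 hu
  filter_upwards [hUC _ (dist_mem_uniformity (by positivity : 0 < ε * δ / 4))] with ij hij z hz
  refine hεu ?_
  have hball : closedBall z δ ⊆ cthickening δ K := closedBall_subset_cthickening hz δ
  have hdiff : ∀ i, DifferentiableOn ℂ (F i) (closedBall z δ) :=
    fun i => (hF i).mono (hball.trans hδU)
  have hz' : ∀ i, DifferentiableAt ℂ (F i) z :=
    fun i => (hdiff i).differentiableAt (closedBall_mem_nhds z hδ)
  rw [dist_eq_norm, ← fderiv_fun_sub (hz' _) (hz' _)]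
  calc _ ≤ 2 * (ε * δ / 4) / δ :=
        norm_fderiv_le_of_forall_mem_closedBall hδ ((hdiff _).fun_sub (hdiff _))
          fun w hw => (dist_eq_norm _ _).symm.trans_le (hij w (hball hw)).le
    _ < ε := by field_simp; linarith

variable [l.NeBot]

lemma exists_hasFDerivAt_prod (hFg : TendstoLocallyUniformlyOn F g l U) (hU : IsOpen U)
    (hF : ∀ i, DifferentiableOn ℂ (F i) U) :
    ∃ g', TendstoLocallyUniformlyOn (fun i => fderiv ℂ (F i)) g' l U ∧
      ∀ z ∈ U, HasFDerivAt g (g' z) z := by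
  obtain ⟨g', hg'⟩ := exists_tendstoLocallyUniformlyOn_of_uniformCauchySeqOn hU
    fun K hKU hK => hFg.uniformCauchySeqOn_fderiv hU hF hKU hK
  exact ⟨g', hg', fun z hz =>
    hasFDerivAt_of_tendsto_locally_uniformly_on' hU hg' hF (fun x hx => hFg.tendsto_at hx) hz⟩

lemma differentiableOn_prod (hFg : TendstoLocallyUniformlyOn F g l U) (hU : IsOpen U)
    (hF : ∀ i, DifferentiableOn ℂ (F i) U) : DifferentiableOn ℂ g U := by
  obtain ⟨g', -, hg⟩ := hFg.exists_hasFDerivAt_prod hU hF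
  exact fun z hz => (hg z hz).differentiableAt.differentiableWithinAt

lemma tendsto_d1 (hFg : TendstoLocallyUniformlyOn F g l U) (hU : IsOpen U)
    (hF : ∀ i, DifferentiableOn ℂ (F i) U) {z : ℂ × ℂ} (hz : z ∈ U) :
    Tendsto (fun i => d1 (F i) z) l (𝓝 (d1 g z)) := by
  obtain ⟨g', hg', hg⟩ := hFg.exists_hasFDerivAt_prod hU hF
  have happly : Tendsto (fun i => fderiv ℂ (F i) z (1, 0)) l (𝓝 (g' z (1, 0))) :=
    ((ContinuousLinearMap.apply ℂ ℂ ((1:ℂ), (0:ℂ))).continuous.tendsto _).comp (hg'.tendsto_at hz)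
  rw [d1_eq_fderiv_apply (hg z hz).differentiableAt, (hg z hz).fderiv]
  exact happly.congr fun i => (d1_eq_fderiv_apply ((hF i z hz).differentiableAt
    (hU.mem_nhds hz))).symm

end TendstoLocallyUniformlyOn

/-! ## The Hardy norm -/

lemma integral_mT {E : Type*} [NormedAddCommGroup E] [NormedSpace ℝ E] (F : ℝ → E) :
    ∫ θ, F θ ∂mT = (2 * π)⁻¹ • ∫ θ in 0..2 * π, F θ := by
  rw [mT, integral_smul_measure, intervalIntegral.integral_of_le (by positivity),
    ENNReal.toReal_inv, ENNReal.toReal_ofReal (by positivity)]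

lemma enorm_le_lintegral_circle {u : ℂ → ℂ} {r s : ℝ} {z : ℂ} (hu : DiffContOnCl ℂ u (ball 0 r))
    (hsr : s < r) (hz : ‖z‖ ≤ s) :
    ‖u z‖ₑ ≤ ENNReal.ofReal (r / (r - s)) * ∫⁻ θ, ‖u (r * exp (θ * I))‖ₑ ∂mT := by
  have hr : 0 < r := (norm_nonneg z).trans_lt (hz.trans_lt hsr)
  have hkernel : ∀ θ : ℝ, ‖(circleMap 0 r θ - 0) / (circleMap 0 r θ - z)‖ₑ ≤
      ENNReal.ofReal (r / (r - s)) := fun θ => by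
    have hdist : r - s ≤ ‖circleMap 0 r θ - z‖ := by
      have := norm_sub_norm_le (circleMap 0 r θ) z
      rw [norm_circleMap_zero, abs_of_pos hr] at this
      linarith
    rw [← ofReal_norm, sub_zero, norm_div, norm_circleMap_zero, abs_of_pos hr]
    exact ENNReal.ofReal_le_ofReal (div_le_div_of_nonneg_left hr.le (by linarith) hdist)
  rw [← abs_of_pos hr] at hu
  rw [← hu.circleAverage_smul_div (by rw [abs_of_pos hr, mem_ball_zero_iff]; linarith),
    Real.circleAverage_def, ← integral_mT]
  calc _ ≤ ∫⁻ θ, ‖((circleMap 0 r θ - 0) / (circleMap 0 r θ - z)) • u (circleMap 0 r θ)‖ₑ ∂mT :=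
        enorm_integral_le_lintegral_enorm _
    _ ≤ ∫⁻ θ, ENNReal.ofReal (r / (r - s)) * ‖u (r * exp (θ * I))‖ₑ ∂mT := by
        refine lintegral_mono fun θ => ?_
        rw [enorm_smul, ← circleMap_zero]
        exact mul_le_mul_left (hkernel θ) _
    _ = _ := lintegral_const_mul' _ _ ENNReal.ofReal_ne_top

lemma H2norm2_eq_sqIntegralSup (h : ℂ × ℂ → ℂ) :
    H2norm2 h = sqIntegralSup mT 1 (fun r θ₁ θ₂ => h (r * exp (θ₁ * I), r * exp (θ₂ * I))) := by
  simp only [H2norm2, sqIntegralSup, Pi.one_apply, mul_one]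

lemma enorm_sq_le_H2norm2 {h : ℂ × ℂ → ℂ} (hh : DifferentiableOn ℂ h bidisc) {r s : ℝ}
    (hsr : s < r) (hr : r < 1) {z : ℂ × ℂ} (hz : ‖z‖ ≤ s) :
    ‖h z‖ₑ ^ 2 ≤ ENNReal.ofReal (r / (r - s)) ^ 4 * H2norm2 h := by
  set C := ENNReal.ofReal (r / (r - s))
  have hr0 : 0 < r := ((norm_nonneg z).trans hz).trans_lt hsr
  set G : ℝ × ℝ → ℝ≥0∞ := fun p => ‖h (r * exp (p.1 * I), r * exp (p.2 * I))‖ₑ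
  have hG : Measurable G := (hh.continuousOn.continuous_torus ⟨hr0, hr⟩).enorm.measurable
  have hbound : ‖h z‖ₑ ≤ C ^ 2 * ∫⁻ p, G p ∂(mT.prod mT) := by
    rw [lintegral_prod _ hG.aemeasurable, sq, mul_assoc,
      ← lintegral_const_mul' _ _ ENNReal.ofReal_ne_top]
    refine (enorm_le_lintegral_circle (hh.diffContOnCl_slice
      (((norm_snd_le z).trans hz).trans_lt (hsr.trans hr)) hr) hsr
      ((norm_fst_le z).trans hz)).trans ?_
    gcongr with θ₁
    exact enorm_le_lintegral_circle (hh.comp_swap_bidisc.diffContOnCl_slice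
      (norm_ofReal_mul_exp_lt_one ⟨hr0, hr⟩ θ₁) hr) hsr
      ((norm_snd_le z).trans hz)
  calc ‖h z‖ₑ ^ 2 ≤ (C ^ 2 * ∫⁻ p, G p ∂(mT.prod mT)) ^ 2 := by gcongr
    _ = C ^ 4 * (∫⁻ p, G p ∂(mT.prod mT)) ^ 2 := by ring
    _ ≤ C ^ 4 * ∫⁻ p, G p ^ 2 ∂(mT.prod mT) := by
        gcongr; exact sq_lintegral_le_lintegral_sq hG.aemeasurable
    _ ≤ C ^ 4 * H2norm2 h := by
        gcongr
        rw [H2norm2_eq_sqIntegralSup, lintegral_prod _ (hG.pow_const 2).aemeasurable]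
        refine le_of_eq_of_le ?_ (lintegral_le_sqIntegralSup _ ⟨hr0, hr⟩)
        simp only [G, ← ofReal_norm, ← ENNReal.ofReal_pow (norm_nonneg _), Pi.one_apply, mul_one]

lemma exists_tendstoLocallyUniformlyOn_of_H2norm2 {f : ℕ → ℂ × ℂ → ℂ}
    (hf : ∀ n, DifferentiableOn ℂ (f n) bidisc)
    (hcauchy : ∀ ε : ℝ, 0 < ε → ∃ N : ℕ, ∀ m n : ℕ, N ≤ m → N ≤ n →
      H2norm2 (fun z => f n z - f m z) < ENNReal.ofReal ε) :
    ∃ g, TendstoLocallyUniformlyOn f g atTop bidisc := by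
  refine exists_tendstoLocallyUniformlyOn_of_uniformCauchySeqOn isOpen_bidisc fun K hKU hK => ?_
  rw [bidisc_eq_ball] at hKU
  obtain ⟨s, hs1, hKs⟩ := exists_lt_subset_ball hK.isClosed hKU
  obtain ⟨r, hsr, hr1⟩ := exists_between (max_lt hs1 one_pos)
  have hq : 0 < r / (r - s) :=
    div_pos ((le_max_right s 0).trans_lt hsr) (sub_pos.2 ((le_max_left s 0).trans_lt hsr))
  have hc : 0 < (r / (r - s)) ^ 4 := pow_pos hq 4
  rw [Metric.uniformCauchySeqOn_iff]
  intro ε hε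
  obtain ⟨N, hN⟩ := hcauchy (ε ^ 2 / (r / (r - s)) ^ 4) (by positivity)
  refine ⟨N, fun m hm n hn z hz => ?_⟩
  have hbound := enorm_sq_le_H2norm2 ((hf m).fun_sub (hf n)) ((le_max_left s 0).trans_lt hsr) hr1
    (mem_ball_zero_iff.1 (hKs hz)).le
  have hlt : ‖f m z - f n z‖ₑ ^ 2 < ENNReal.ofReal (ε ^ 2) := by
    refine hbound.trans_lt ?_
    rw [← ENNReal.ofReal_pow hq.le, ← mul_div_cancel₀ (ε ^ 2) hc.ne', ENNReal.ofReal_mul hc.le]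
    exact ENNReal.mul_lt_mul_right (by simpa using hc) ENNReal.ofReal_ne_top (hN n m hn hm)
  rw [← ofReal_norm, ← ENNReal.ofReal_pow (norm_nonneg _),
    ENNReal.ofReal_lt_ofReal_iff (by positivity)] at hlt
  rw [dist_eq_norm]
  exact (pow_lt_pow_iff_left₀ (norm_nonneg _) hε.le two_ne_zero).1 hlt

lemma H2norm2_le_liminf {φ : ℕ → ℂ × ℂ → ℂ} {ψ : ℂ × ℂ → ℂ} (hφ : ∀ n, ContinuousOn (φ n) bidisc)
    (hφψ : ∀ z ∈ bidisc, Tendsto (fun n => φ n z) atTop (𝓝 (ψ z))) :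
    H2norm2 ψ ≤ liminf (fun n => H2norm2 (φ n)) atTop := by
  simp only [H2norm2_eq_sqIntegralSup]
  exact sqIntegralSup_le_liminf measurable_one
    (fun n _ hr => ((hφ n).continuous_torus hr).aemeasurable) fun _ hr =>
      Eventually.of_forall fun p => hφψ _
        ⟨norm_ofReal_mul_exp_lt_one hr p.1, norm_ofReal_mul_exp_lt_one hr p.2⟩

lemma H2norm2_le_two_mul_add {φ ψ : ℂ × ℂ → ℂ} (hφ : ContinuousOn φ bidisc)
    (hψ : ContinuousOn ψ bidisc) :
    H2norm2 ψ ≤ 2 * H2norm2 φ + 2 * H2norm2 (fun z => φ z - ψ z) := by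
  simp only [H2norm2_eq_sqIntegralSup]
  exact sqIntegralSup_le_two_mul_add measurable_one (Eventually.of_forall fun _ => zero_le_one)
    (fun _ hr => (hψ.continuous_torus hr).aemeasurable)
    (fun _ hr => (hφ.continuous_torus hr).aemeasurable)
    (fun _ hr => ((hφ.sub hψ).continuous_torus hr).aemeasurable)
    fun _ _ => Eventually.of_forall fun _ => norm_le_insert _ _

/-! ## The Dirichlet integral -/

lemma measurable_poissonR (μ : Measure (sphere (0:ℂ) 1)) [SFinite μ] :
    Measurable (poissonR μ) := by
  have h : Measurable fun p : ℂ × sphere (0:ℂ) 1 => (1 - ‖p.1‖ ^ 2) / ‖p.1 - (p.2 : ℂ)‖ ^ 2 := by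
    fun_prop
  exact (h.stronglyMeasurable.integral_prod_right').measurable

lemma poissonR_nonneg (μ : Measure (sphere (0:ℂ) 1)) {w : ℂ} (hw : ‖w‖ ≤ 1) :
    0 ≤ poissonR μ w :=
  integral_nonneg fun _ => div_nonneg (by nlinarith [norm_nonneg w]) (by positivity)

def partialDirichlet (μ : Measure (sphere (0:ℂ) 1)) (h : ℂ × ℂ → ℂ) : ℝ≥0∞ :=
  sqIntegralSup mA (poissonR μ) fun r θ z => d1 h (z, (r : ℂ) * exp ((θ : ℂ) * I))

lemma Dint_eq_partialDirichlet_add (μ₁ μ₂ : Measure (sphere (0:ℂ) 1)) (h : ℂ × ℂ → ℂ) :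
    Dint μ₁ μ₂ h = partialDirichlet μ₁ h + partialDirichlet μ₂ (h ∘ Prod.swap) := rfl

lemma aemeasurable_d1_torus {h : ℂ × ℂ → ℂ} (hh : DifferentiableOn ℂ h bidisc)
    {r : ℝ} (hr : r ∈ Ioo (0:ℝ) 1) :
    AEMeasurable (Function.uncurry fun (θ : ℝ) z => d1 h (z, (r : ℂ) * exp ((θ : ℂ) * I)))
      (mT.prod mA) :=
  aemeasurable_deriv_of_continuousOn ae_mem_ball_prod_mA
    (u := fun p => h (p.2, (r : ℂ) * exp ((p.1 : ℂ) * I)))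
    (hh.continuousOn.comp (by fun_prop) fun p hp =>
      ⟨mem_ball_zero_iff.1 hp.2, norm_ofReal_mul_exp_lt_one hr p.1⟩)
    fun θ => hh.slice_fst (norm_ofReal_mul_exp_lt_one hr θ)

section PartialDirichlet

variable (μ : Measure (sphere (0:ℂ) 1)) [SFinite μ]

lemma partialDirichlet_le_liminf {φ : ℕ → ℂ × ℂ → ℂ} {ψ : ℂ × ℂ → ℂ}
    (hφ : ∀ n, DifferentiableOn ℂ (φ n) bidisc) (hφψ : TendstoLocallyUniformlyOn φ ψ atTop bidisc) :
    partialDirichlet μ ψ ≤ liminf (fun n => partialDirichlet μ (φ n)) atTop :=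
  sqIntegralSup_le_liminf (measurable_poissonR μ) (fun n _ hr => aemeasurable_d1_torus (hφ n) hr)
    fun _ hr => ae_mem_ball_prod_mA.mono fun p hp => hφψ.tendsto_d1 isOpen_bidisc hφ
      ⟨mem_ball_zero_iff.1 hp, norm_ofReal_mul_exp_lt_one hr p.1⟩

lemma partialDirichlet_le_two_mul_add {φ ψ : ℂ × ℂ → ℂ} (hφ : DifferentiableOn ℂ φ bidisc)
    (hψ : DifferentiableOn ℂ ψ bidisc) :
    partialDirichlet μ ψ ≤ 2 * partialDirichlet μ φ + 2 * partialDirichlet μ (fun z => φ z - ψ z) :=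
  sqIntegralSup_le_two_mul_add (measurable_poissonR μ)
    (ae_mem_ball_mA.mono fun _ hw => poissonR_nonneg μ (mem_ball_zero_iff.1 hw).le)
    (fun _ hr => aemeasurable_d1_torus hψ hr) (fun _ hr => aemeasurable_d1_torus hφ hr)
    (fun _ hr => aemeasurable_d1_torus (hφ.fun_sub hψ) hr) fun r hr =>
      ae_mem_ball_prod_mA.mono fun p hp => by
        have hz : (p.2, (r : ℂ) * exp (p.1 * I)) ∈ bidisc :=
          ⟨mem_ball_zero_iff.1 hp, norm_ofReal_mul_exp_lt_one hr p.1⟩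
        dsimp only [Function.uncurry_def]
        rw [d1_sub (hφ.differentiableAt (isOpen_bidisc.mem_nhds hz))
          (hψ.differentiableAt (isOpen_bidisc.mem_nhds hz))]
        exact norm_le_insert _ _

end PartialDirichlet

section Dnorm2

variable {μ₁ μ₂ : Measure (sphere (0:ℂ) 1)} [SFinite μ₁] [SFinite μ₂]

lemma Dnorm2_le_liminf {φ : ℕ → ℂ × ℂ → ℂ} {ψ : ℂ × ℂ → ℂ}
    (hφ : ∀ n, DifferentiableOn ℂ (φ n) bidisc) (hφψ : TendstoLocallyUniformlyOn φ ψ atTop bidisc) :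
    Dnorm2 μ₁ μ₂ ψ ≤ liminf (fun n => Dnorm2 μ₁ μ₂ (φ n)) atTop := by
  have hswap : TendstoLocallyUniformlyOn (fun n => φ n ∘ Prod.swap) (ψ ∘ Prod.swap) atTop bidisc :=
    hφψ.comp _ (fun _ => swap_mem_bidisc) continuous_swap.continuousOn
  calc Dnorm2 μ₁ μ₂ ψ
      = H2norm2 ψ + (partialDirichlet μ₁ ψ + partialDirichlet μ₂ (ψ ∘ Prod.swap)) := rfl
    _ ≤ liminf (fun n => H2norm2 (φ n)) atTop + (liminf (fun n => partialDirichlet μ₁ (φ n)) atTop +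
          liminf (fun n => partialDirichlet μ₂ (φ n ∘ Prod.swap)) atTop) := by
        gcongr
        · exact H2norm2_le_liminf (fun n => (hφ n).continuousOn) fun _ hz => hφψ.tendsto_at hz
        · exact partialDirichlet_le_liminf μ₁ hφ hφψ
        · exact partialDirichlet_le_liminf μ₂ (fun n => (hφ n).comp_swap_bidisc) hswap
    _ ≤ liminf (fun n => H2norm2 (φ n) +
          (partialDirichlet μ₁ (φ n) + partialDirichlet μ₂ (φ n ∘ Prod.swap))) atTop :=
        (add_le_add le_rfl (ENNReal.liminf_add_liminf_le _ _)).trans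
          (ENNReal.liminf_add_liminf_le _ _)
    _ = liminf (fun n => Dnorm2 μ₁ μ₂ (φ n)) atTop := rfl

lemma Dnorm2_le_two_mul_add {φ ψ : ℂ × ℂ → ℂ} (hφ : DifferentiableOn ℂ φ bidisc)
    (hψ : DifferentiableOn ℂ ψ bidisc) :
    Dnorm2 μ₁ μ₂ ψ ≤ 2 * Dnorm2 μ₁ μ₂ φ + 2 * Dnorm2 μ₁ μ₂ (fun z => φ z - ψ z) := by
  have h₀ := H2norm2_le_two_mul_add hφ.continuousOn hψ.continuousOn
  have h₁ := partialDirichlet_le_two_mul_add μ₁ hφ hψ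
  have h₂ : partialDirichlet μ₂ (ψ ∘ Prod.swap) ≤ 2 * partialDirichlet μ₂ (φ ∘ Prod.swap) +
      2 * partialDirichlet μ₂ ((fun z => φ z - ψ z) ∘ Prod.swap) :=
    partialDirichlet_le_two_mul_add μ₂ hφ.comp_swap_bidisc hψ.comp_swap_bidisc
  calc Dnorm2 μ₁ μ₂ ψ
      = H2norm2 ψ + (partialDirichlet μ₁ ψ + partialDirichlet μ₂ (ψ ∘ Prod.swap)) := rfl
    _ ≤ _ := add_le_add h₀ (add_le_add h₁ h₂)
    _ = 2 * Dnorm2 μ₁ μ₂ φ + 2 * Dnorm2 μ₁ μ₂ (fun z => φ z - ψ z) := by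
        simp only [Dnorm2, Dint_eq_partialDirichlet_add]
        ring

lemma MemD.of_Dnorm2_sub_ne_top {φ ψ : ℂ × ℂ → ℂ} (hφ : MemD μ₁ μ₂ φ)
    (hψ : DifferentiableOn ℂ ψ bidisc) (hφψ : Dnorm2 μ₁ μ₂ (fun z => φ z - ψ z) ≠ ⊤) :
    MemD μ₁ μ₂ ψ := by
  have hφ' : Dnorm2 μ₁ μ₂ φ ≠ ⊤ := ENNReal.add_ne_top.2 ⟨hφ.2.1.ne, hφ.2.2.ne⟩
  have hψ' : Dnorm2 μ₁ μ₂ ψ < ⊤ := (Dnorm2_le_two_mul_add hφ.1 hψ).trans_lt <|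
    ENNReal.add_lt_top.2 ⟨ENNReal.mul_lt_top ENNReal.ofNat_lt_top hφ'.lt_top,
      ENNReal.mul_lt_top ENNReal.ofNat_lt_top hφψ.lt_top⟩
  exact ⟨hψ, le_self_add.trans_lt hψ', le_add_self.trans_lt hψ'⟩

end Dnorm2

/-- The Dirichlet-type space `D(μ₁,μ₂)` is complete: every Cauchy sequence in the
`D(μ₁,μ₂)`-norm converges in the `D(μ₁,μ₂)`-norm to a member of `D(μ₁,μ₂)`. -/
theorem stmt7 (μ₁ μ₂ : Measure (Metric.sphere (0:ℂ) 1))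
    [IsFiniteMeasure μ₁] [IsFiniteMeasure μ₂]
    (f : ℕ → ℂ × ℂ → ℂ) (hf : ∀ n, MemD μ₁ μ₂ (f n))
    (hcauchy : ∀ ε : ℝ, 0 < ε → ∃ N : ℕ, ∀ m n : ℕ, N ≤ m → N ≤ n →
      Dnorm2 μ₁ μ₂ (fun z => f n z - f m z) < ENNReal.ofReal ε) :
    ∃ g : ℂ × ℂ → ℂ, MemD μ₁ μ₂ g ∧ ∀ ε : ℝ, 0 < ε → ∃ N : ℕ, ∀ n : ℕ, N ≤ n →
      Dnorm2 μ₁ μ₂ (fun z => f n z - g z) < ENNReal.ofReal ε := by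
  obtain ⟨g, hfg⟩ := exists_tendstoLocallyUniformlyOn_of_H2norm2 (fun n => (hf n).1)
    fun ε hε => (hcauchy ε hε).imp fun N hN m n hm hn => le_self_add.trans_lt (hN m n hm hn)
  have hg : DifferentiableOn ℂ g bidisc := hfg.differentiableOn_prod isOpen_bidisc fun n => (hf n).1
  have hconv : ∀ ε : ℝ, 0 < ε → ∃ N : ℕ, ∀ n : ℕ, N ≤ n →
      Dnorm2 μ₁ μ₂ (fun z => f n z - g z) < ENNReal.ofReal ε := by
    intro ε hε
    obtain ⟨N, hN⟩ := hcauchy (ε / 2) (half_pos hε)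
    refine ⟨N, fun n hn => ?_⟩
    calc Dnorm2 μ₁ μ₂ (fun z => f n z - g z)
        ≤ liminf (fun m => Dnorm2 μ₁ μ₂ (fun z => f n z - f m z)) atTop :=
          Dnorm2_le_liminf (fun m => (hf n).1.fun_sub (hf m).1)
            ((tendstoLocallyUniformlyOn_const (f n) atTop bidisc).sub hfg)
      _ ≤ ENNReal.ofReal (ε / 2) := liminf_le_of_frequently_le' <|
          ((eventually_ge_atTop N).mono fun m hm => (hN m n hm hn).le).frequently
      _ < ENNReal.ofReal ε := ENNReal.ofReal_lt_ofReal_iff'.2 ⟨half_lt_self hε, hε⟩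
  obtain ⟨N, hN⟩ := hconv 1 one_pos
  exact ⟨g, (hf N).of_Dnorm2_sub_ne_top hg (hN N le_rfl).ne_top, hconv⟩
end
end

section
/- Let d ≥ 1, let λ = (λ₁,…,λ_d) ∈ 𝔻^d and let j ∈ {1,…,d}. If f ∈ H²(𝔻^d) vanishes on {z ∈ 𝔻^d : z_j = λ_j}, then there exists g ∈ H²(𝔻^d) such that f(z) = (z_j − λ_j) g(z) for all z ∈ 𝔻^d. In other words, the Hardy space H²(𝔻^d) has the division property. -/
open MeasureTheory Complex Set
open scoped ENNReal Real NNReal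

noncomputable section

/-- The open unit polydisc `𝔻^d`. -/
def polydisc (d : ℕ) : Set (Fin d → ℂ) := {z | ∀ i, ‖z i‖ < 1}

/-- The squared Hardy norm `‖f‖²_{H²(𝔻^d)}`, via suprema of means over tori. -/
def H2polyNorm2 (d : ℕ) (f : (Fin d → ℂ) → ℂ) : ℝ≥0∞ :=
  ⨆ r ∈ Set.Ioo (0:ℝ) 1, ∫⁻ θ : Fin d → ℝ,
    ENNReal.ofReal (‖f (fun i => (r:ℂ) * Complex.exp ((θ i : ℂ) * Complex.I))‖ ^ 2)
      ∂(Measure.pi fun _ : Fin d => mT)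

/-- Membership in the Hardy space `H²(𝔻^d)`. -/
def MemH2poly (d : ℕ) (f : (Fin d → ℂ) → ℂ) : Prop :=
  DifferentiableOn ℂ f (polydisc d) ∧ H2polyNorm2 d f < ⊤

/-!
Write `g = coordDslope f j c` for the difference quotient of `f` in the `j`-th variable at `c`,
so that `f z = (z_j - c) g z` whenever `f` vanishes on `{z_j = c}`. Off that hyperplane `g` is
visibly holomorphic. Near a point `a` with `a_j = c`, Cauchy's formula on a small circle around
`c` writes `g` as a circle integral whose integrand is jointly holomorphic in `(z, w)`; by the
Schwarz lemma its derivative in `z` is uniformly bounded, so one may differentiate under the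
integral sign. Finally `|z_j - c| ≥ (1 - |c|)/2` once `|z_j| > (1 + |c|)/2`, so on the tori of
large radius `|g| ≤ 2|f|/(1 - |c|)`, while on the small tori `g` is bounded; hence `g ∈ H²`.
-/

open Metric

theorem Function.update_mem_ball {ι X : Type*} [Fintype ι] [DecidableEq ι] [PseudoMetricSpace X]
    {x a : ι → X} {r : ℝ} {j : ι} {w : X} (hx : x ∈ ball a r)
    (hw : w ∈ ball (a j) r) : Function.update x j w ∈ ball a r := by
  have hr : 0 < r := pos_of_mem_ball hw
  rw [ball_pi a hr] at hx ⊢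
  intro i _
  rcases eq_or_ne i j with rfl | hij
  · simpa using hw
  · simpa [hij] using hx i (mem_univ i)

theorem differentiable_update_prod {ι : Type*} [Fintype ι] [DecidableEq ι] (j : ι) :
    Differentiable ℂ (fun p : (ι → ℂ) × ℂ => Function.update p.1 j p.2) := by
  refine differentiable_pi.2 fun i => ?_
  rcases eq_or_ne i j with rfl | hij
  · simp only [Function.update_self]
    fun_prop
  · simp only [Function.update_of_ne hij]
    fun_prop

theorem dslope_eq_circleIntegral {E : Type*} [NormedAddCommGroup E] [NormedSpace ℂ E]
    [CompleteSpace E] {F : ℂ → E} {c z : ℂ} {R R' : ℝ} (hF : DifferentiableOn ℂ F (ball c R'))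
    (hRR' : R < R') (hz : z ∈ ball c R) :
    dslope F c z = (2 * π * I)⁻¹ • ∮ w in C(c, R), (w - z)⁻¹ • slope F c w := by
  have hR : 0 < R := pos_of_mem_ball hz
  have hdslope : DifferentiableOn ℂ (dslope F c) (closedBall c R) :=
    ((differentiableOn_dslope (ball_mem_nhds c (hR.trans hRR'))).2 hF).mono
      (closedBall_subset_ball hRR')
  have hslope : EqOn (fun w => (w - z)⁻¹ • dslope F c w) (fun w => (w - z)⁻¹ • slope F c w)
      (sphere c R) := fun w hw => by
    dsimp only
    rw [dslope_of_ne F (ne_of_mem_sphere hw hR.ne')]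
  rw [← circleIntegral.integral_congr hR.le hslope, hdslope.circleIntegral_sub_inv_smul hz,
    smul_smul, inv_mul_cancel₀ two_pi_I_ne_zero, one_smul]

section CircleIntegralParam
variable {E : Type*} [NormedAddCommGroup E] [NormedSpace ℂ E] [FiniteDimensional ℂ E]
  [MeasurableSpace E] [BorelSpace E]

theorem differentiableAt_circleIntegral_of_differentiableOn {h : E × ℂ → ℂ} {U : Set (E × ℂ)}
    (hU : IsOpen U) (hh : DifferentiableOn ℂ h U) {x₀ : E} {c : ℂ} {R : ℝ}
    (hsub : ∀ w ∈ sphere c |R|, (x₀, w) ∈ U) :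
    DifferentiableAt ℂ (fun x => ∮ w in C(c, R), h (x, w)) x₀ := by
  set K : Set (E × ℂ) := {x₀} ×ˢ sphere c |R|
  have hK : IsCompact K := isCompact_singleton.prod (isCompact_sphere c |R|)
  obtain ⟨δ, hδ, hKU⟩ := hK.exists_cthickening_subset_open hU <| by
    rintro ⟨x, w⟩ ⟨rfl, hw⟩
    exact hsub w hw
  obtain ⟨M, hM⟩ := hK.cthickening.exists_bound_of_continuousOn (hh.continuousOn.mono hKU)
  have hδ2 : 0 < δ / 2 := half_pos hδ
  set p : E → ℝ → E × ℂ := fun x θ => (x, circleMap c R θ)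
  have hball : ∀ x ∈ ball x₀ (δ / 2), ∀ θ, ball (p x θ) (δ / 2) ⊆ cthickening δ K := by
    intro x hx θ q hq
    refine mem_cthickening_of_dist_le q (p x₀ θ) δ K ⟨rfl, circleMap_mem_sphere' c R θ⟩ ?_
    have hp : dist (p x θ) (p x₀ θ) < δ / 2 := by simpa [p, Prod.dist_eq] using hx
    linarith [dist_triangle q (p x θ) (p x₀ θ), mem_ball.1 hq]
  have hpU : ∀ x ∈ ball x₀ (δ / 2), ∀ θ, p x θ ∈ U := fun x hx θ =>
    hKU (hball x hx θ (mem_ball_self hδ2))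
  have hfderiv_le : ∀ x ∈ ball x₀ (δ / 2), ∀ θ, ‖fderiv ℂ h (p x θ)‖ ≤ 2 * M / (δ / 2) := by
    intro x hx θ
    refine norm_fderiv_le_div_of_mapsTo_ball (hh.mono ((hball x hx θ).trans hKU)) ?_ hδ2
    intro q hq
    rw [mem_closedBall, dist_eq_norm]
    linarith [norm_sub_le (h q) (h (p x θ)), hM q (hball x hx θ hq),
      hM _ (hball x hx θ (mem_ball_self hδ2))]
  have hasFDeriv : ∀ x ∈ ball x₀ (δ / 2), ∀ θ, HasFDerivAt (fun y => h (p y θ))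
      ((fderiv ℂ h (p x θ)).comp (ContinuousLinearMap.inl ℂ E ℂ)) x := fun x hx θ =>
    (hh.differentiableAt (hU.mem_nhds (hpU x hx θ))).hasFDerivAt.comp x
      (hasFDerivAt_prodMk_left x _)
  have hcont : ∀ x ∈ ball x₀ (δ / 2), Continuous fun θ => deriv (circleMap c R) θ • h (p x θ) :=
    fun x hx => by
      simp only [deriv_circleMap]
      exact ((continuous_circleMap 0 R).mul continuous_const).smul
        (hh.continuousOn.comp_continuous (by fun_prop) (hpU x hx))
  refine (intervalIntegral.hasFDerivAt_integral_of_dominated_of_fderiv_le (μ := volume)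
    (F := fun x θ => deriv (circleMap c R) θ • h (p x θ))
    (F' := fun x θ => deriv (circleMap c R) θ • (fderiv ℂ h (p x θ)).comp
      (ContinuousLinearMap.inl ℂ E ℂ))
    (bound := fun _ => |R| * (2 * M / (δ / 2))) (ball_mem_nhds x₀ hδ2)
    (Filter.eventually_of_mem (ball_mem_nhds x₀ hδ2) fun x hx =>
      (hcont x hx).aestronglyMeasurable)
    ((hcont x₀ (mem_ball_self hδ2)).intervalIntegrable _ _) ?_ ?_ intervalIntegrable_const
    (Filter.Eventually.of_forall fun θ _ x hx =>
      (hasFDeriv x hx θ).const_smul (deriv (circleMap c R) θ))).differentiableAt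
  · simp only [deriv_circleMap]
    refine ((continuous_circleMap 0 R).mul continuous_const).aestronglyMeasurable.smul ?_
    have hcompInl : Continuous fun T : E × ℂ →L[ℂ] ℂ => T.comp (ContinuousLinearMap.inl ℂ E ℂ) :=
      ((ContinuousLinearMap.compL ℂ E (E × ℂ) ℂ).flip (ContinuousLinearMap.inl ℂ E ℂ)).continuous
    exact (hcompInl.measurable.comp
      ((measurable_fderiv ℂ h).comp (by fun_prop))).aestronglyMeasurable
  · refine Filter.Eventually.of_forall fun θ _ x hx => ?_
    rw [norm_smul, deriv_circleMap, norm_mul, norm_circleMap_zero, norm_I, mul_one]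
    gcongr
    exact (ContinuousLinearMap.opNorm_comp_le _ _).trans
      (mul_le_of_le_one_right (norm_nonneg _) (ContinuousLinearMap.norm_inl_le_one ℂ E ℂ)) |>.trans
      (hfderiv_le x hx θ)

end CircleIntegralParam

section CoordDslope
variable {ι : Type*} [DecidableEq ι] {f : (ι → ℂ) → ℂ} {U : Set (ι → ℂ)} {j : ι} {c : ℂ}

def coordDslope (f : (ι → ℂ) → ℂ) (j : ι) (c : ℂ) (z : ι → ℂ) : ℂ :=
  dslope (fun w => f (Function.update z j w)) c (z j)

theorem sub_mul_coordDslope (f : (ι → ℂ) → ℂ) (j : ι) (c : ℂ) (z : ι → ℂ) :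
    (z j - c) * coordDslope f j c z = f z - f (Function.update z j c) := by
  simpa [coordDslope] using sub_smul_dslope (fun w => f (Function.update z j w)) c (z j)

variable [Fintype ι]

theorem DifferentiableOn.differentiableAt_comp_update (hU : IsOpen U)
    (hf : DifferentiableOn ℂ f U) {p : (ι → ℂ) × ℂ} (hp : Function.update p.1 j p.2 ∈ U) :
    DifferentiableAt ℂ (fun q : (ι → ℂ) × ℂ => f (Function.update q.1 j q.2)) p :=
  (hf.differentiableAt (hU.mem_nhds hp)).comp p (differentiable_update_prod j p)

theorem differentiableAt_coordDslope_of_ne (hU : IsOpen U) (hf : DifferentiableOn ℂ f U)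
    (hUc : ∀ z ∈ U, Function.update z j c ∈ U) {a : ι → ℂ} (ha : a ∈ U) (haj : a j ≠ c) :
    DifferentiableAt ℂ (coordDslope f j c) a := by
  have hquot : (fun x => (x j - c)⁻¹ * (f x - f (Function.update x j c)))
      =ᶠ[nhds a] coordDslope f j c := by
    filter_upwards [(isOpen_ne_fun (continuous_apply j) continuous_const).mem_nhds haj] with x hx
    rw [← sub_mul_coordDslope, inv_mul_cancel_left₀ (sub_ne_zero.2 hx)]
  refine hquot.differentiableAt_iff.1 ?_
  have hfc : DifferentiableAt ℂ (fun x => f (Function.update x j c)) a :=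
    (hf.differentiableAt (hU.mem_nhds (hUc a ha))).comp a
      ((differentiable_update_prod j).comp (differentiable_id.prodMk (differentiable_const c)) a)
  have hj : DifferentiableAt ℂ (fun x : ι → ℂ => x j - c) a := by fun_prop
  exact (hj.inv (sub_ne_zero.2 haj)).mul ((hf.differentiableAt (hU.mem_nhds ha)).sub hfc)

theorem differentiableAt_coordDslope_of_eq (hU : IsOpen U) (hf : DifferentiableOn ℂ f U)
    (hUc : ∀ z ∈ U, Function.update z j c ∈ U) {a : ι → ℂ} (ha : a ∈ U) (haj : a j = c) :
    DifferentiableAt ℂ (coordDslope f j c) a := by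
  obtain ⟨ε, hε, haU⟩ := Metric.isOpen_iff.1 hU a ha
  set ρ := ε / 3 with hρε
  have hρ : 0 < ρ := by positivity
  set h : (ι → ℂ) × ℂ → ℂ := fun p =>
    (p.2 - p.1 j)⁻¹ • slope (fun w => f (Function.update p.1 j w)) c p.2
  have hupd : ∀ x ∈ ball a ρ, ∀ w ∈ ball c (2 * ρ), Function.update x j w ∈ U :=
    fun x hx w hw => haU <| Function.update_mem_ball (ball_subset_ball (by linarith) hx)
      (by rw [haj]; exact ball_subset_ball (by linarith) hw)
  have hrepr : ∀ x ∈ ball a ρ,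
      coordDslope f j c x = (2 * π * I)⁻¹ • ∮ w in C(c, ρ), h (x, w) := by
    intro x hx
    refine dslope_eq_circleIntegral (R' := 2 * ρ) (fun w hw => ?_) (by linarith) ?_
    · exact ((hf.differentiableAt_comp_update hU (p := (x, w)) (hupd x hx w hw)).comp w
        (differentiableAt_const x |>.prodMk differentiableAt_id)).differentiableWithinAt
    · rw [← haj]
      exact (dist_le_pi_dist x a j).trans_lt hx
  set V : Set ((ι → ℂ) × ℂ) := {p | Function.update p.1 j p.2 ∈ U ∧ p.2 ≠ c ∧ p.2 ≠ p.1 j}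
  have hV : IsOpen V :=
    (hU.preimage (differentiable_update_prod j).continuous).inter
      ((isOpen_ne_fun continuous_snd continuous_const).inter
        (isOpen_ne_fun continuous_snd ((continuous_apply j).comp continuous_fst)))
  have hh : DifferentiableOn ℂ h V := by
    rintro ⟨x, w⟩ ⟨hxw, hwc, hwx⟩
    have hxc : Function.update x j c ∈ U := by simpa using hUc _ hxw
    have hfc : DifferentiableAt ℂ (fun q : (ι → ℂ) × ℂ => f (Function.update q.1 j c)) (x, w) :=
      (hf.differentiableAt (hU.mem_nhds hxc)).comp (x, w)
        ((differentiable_update_prod j).comp (differentiable_fst.prodMk (differentiable_const c))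
          (x, w))
    have hwxj : DifferentiableAt ℂ (fun q : (ι → ℂ) × ℂ => q.2 - q.1 j) (x, w) := by fun_prop
    have hwc' : DifferentiableAt ℂ (fun q : (ι → ℂ) × ℂ => q.2 - c) (x, w) := by fun_prop
    simp only [h, slope_def_module, smul_eq_mul]
    exact ((hwxj.inv (sub_ne_zero.2 hwx)).mul ((hwc'.inv (sub_ne_zero.2 hwc)).mul
      ((hf.differentiableAt_comp_update hU hxw).sub hfc))).differentiableWithinAt
  have hsphere : ∀ w ∈ sphere c |ρ|, (a, w) ∈ V := by
    intro w hw
    rw [abs_of_pos hρ] at hw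
    have hwc : w ≠ c := ne_of_mem_sphere hw hρ.ne'
    exact ⟨hupd a (mem_ball_self hρ) w (sphere_subset_ball (by linarith) hw), hwc,
      show w ≠ a j by rwa [haj]⟩
  exact (Filter.eventuallyEq_of_mem (ball_mem_nhds a hρ) hrepr).differentiableAt_iff.2
    ((differentiableAt_circleIntegral_of_differentiableOn hV hh hsphere).const_smul
      (2 * π * I)⁻¹)

theorem differentiableOn_coordDslope (hU : IsOpen U) (hf : DifferentiableOn ℂ f U)
    (hUc : ∀ z ∈ U, Function.update z j c ∈ U) : DifferentiableOn ℂ (coordDslope f j c) U :=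
  fun a ha => (if haj : a j = c then differentiableAt_coordDslope_of_eq hU hf hUc ha haj
    else differentiableAt_coordDslope_of_ne hU hf hUc ha haj).differentiableWithinAt

end CoordDslope

instance inst_s13 : IsProbabilityMeasure mT := by
  constructor
  rw [mT, Measure.smul_apply, Measure.restrict_apply MeasurableSet.univ, univ_inter,
    Real.volume_Ioc, sub_zero, smul_eq_mul]
  exact ENNReal.inv_mul_cancel (ENNReal.ofReal_pos.2 Real.two_pi_pos).ne' ENNReal.ofReal_ne_top

theorem polydisc_eq_ball (d : ℕ) : polydisc d = ball 0 1 := by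
  ext z
  simp [polydisc, pi_norm_lt_iff one_pos]

theorem isOpen_polydisc (d : ℕ) : IsOpen (polydisc d) := by
  rw [polydisc_eq_ball]
  exact isOpen_ball

theorem update_mem_polydisc {d : ℕ} {z : Fin d → ℂ} (hz : z ∈ polydisc d) (j : Fin d) {w : ℂ}
    (hw : ‖w‖ < 1) : Function.update z j w ∈ polydisc d := by
  rw [polydisc_eq_ball] at hz ⊢
  exact Function.update_mem_ball hz (by simpa using hw)

theorem H2polyNorm2_le_of_sq_norm_le {d : ℕ} {f g : (Fin d → ℂ) → ℂ} {A B : ℝ} (hA : 0 ≤ A)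
    (hB : 0 ≤ B) (hfg : ∀ r ∈ Ioo (0 : ℝ) 1, ∀ θ : Fin d → ℝ,
      ‖g (fun i => (r : ℂ) * exp (θ i * I))‖ ^ 2 ≤
        A + B * ‖f (fun i => (r : ℂ) * exp (θ i * I))‖ ^ 2) :
    H2polyNorm2 d g ≤ ENNReal.ofReal A + ENNReal.ofReal B * H2polyNorm2 d f := by
  refine iSup₂_le fun r hr => ?_
  calc ∫⁻ θ, ENNReal.ofReal (‖g (fun i => (r : ℂ) * exp (θ i * I))‖ ^ 2)
        ∂(Measure.pi fun _ => mT)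
      ≤ ∫⁻ θ, ENNReal.ofReal A + ENNReal.ofReal B *
          ENNReal.ofReal (‖f (fun i => (r : ℂ) * exp (θ i * I))‖ ^ 2)
          ∂(Measure.pi fun _ => mT) := by
        refine lintegral_mono fun θ => ?_
        rw [← ENNReal.ofReal_mul hB, ← ENNReal.ofReal_add hA (by positivity)]
        exact ENNReal.ofReal_le_ofReal (hfg r hr θ)
    _ = ENNReal.ofReal A + ENNReal.ofReal B * ∫⁻ θ,
          ENNReal.ofReal (‖f (fun i => (r : ℂ) * exp (θ i * I))‖ ^ 2)
          ∂(Measure.pi fun _ => mT) := by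
        rw [lintegral_add_left measurable_const, lintegral_const, measure_univ, mul_one,
          lintegral_const_mul' _ _ ENNReal.ofReal_ne_top]
    _ ≤ ENNReal.ofReal A + ENNReal.ofReal B * H2polyNorm2 d f := by
        gcongr
        exact le_iSup₂ (f := fun r (_ : r ∈ Ioo (0 : ℝ) 1) => ∫⁻ θ,
          ENNReal.ofReal (‖f (fun i => (r : ℂ) * exp (θ i * I))‖ ^ 2)
          ∂(Measure.pi fun _ => mT)) r hr

theorem H2polyNorm2_lt_top_of_norm_le {d : ℕ} {f g : (Fin d → ℂ) → ℂ} (j : Fin d)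
    (hg : ContinuousOn g (polydisc d)) {r₀ K : ℝ} (hr₀ : r₀ < 1)
    (hfg : ∀ z ∈ polydisc d, r₀ < ‖z j‖ → ‖g z‖ ≤ K * ‖f z‖) (hf : H2polyNorm2 d f < ⊤) :
    H2polyNorm2 d g < ⊤ := by
  have hball : closedBall (0 : Fin d → ℂ) r₀ ⊆ polydisc d := by
    rw [polydisc_eq_ball]
    exact closedBall_subset_ball hr₀
  obtain ⟨C, hC⟩ := (isCompact_closedBall _ _).exists_bound_of_continuousOn (hg.mono hball)
  refine (H2polyNorm2_le_of_sq_norm_le (sq_nonneg C) (sq_nonneg K) fun r hr θ => ?_).trans_lt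
    (ENNReal.add_lt_top.2 ⟨ENNReal.ofReal_lt_top, ENNReal.mul_lt_top ENNReal.ofReal_lt_top hf⟩)
  set z : Fin d → ℂ := fun i => (r : ℂ) * exp (θ i * I)
  have hz : ∀ i, ‖z i‖ = r := fun i => by simp [z, abs_of_pos hr.1]
  by_cases hr₀r : r₀ < r
  · have hgf := hfg z (fun i => (hz i).trans_lt hr.2) ((hz j).symm ▸ hr₀r)
    nlinarith [norm_nonneg (g z), sq_nonneg C]
  · have hzC : ‖g z‖ ≤ C := hC z <| by
      rw [mem_closedBall_zero_iff, pi_norm_le_iff_of_nonneg (hr.1.le.trans (not_lt.1 hr₀r))]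
      exact fun i => (hz i).trans_le (not_lt.1 hr₀r)
    nlinarith [norm_nonneg (g z), norm_nonneg (f z), sq_nonneg K]

theorem stmt13_general (d : ℕ) (lam : Fin d → ℂ) (hlam : lam ∈ polydisc d)
    (j : Fin d) (f : (Fin d → ℂ) → ℂ) (hf : MemH2poly d f)
    (hvan : ∀ z ∈ polydisc d, z j = lam j → f z = 0) :
    ∃ g : (Fin d → ℂ) → ℂ, MemH2poly d g ∧
      ∀ z ∈ polydisc d, f z = (z j - lam j) * g z := by
  set c := lam j
  have hc : ‖c‖ < 1 := hlam j
  have hfactor : ∀ z ∈ polydisc d, f z = (z j - c) * coordDslope f j c z := fun z hz => by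
    rw [sub_mul_coordDslope, hvan _ (update_mem_polydisc hz j hc) (Function.update_self ..),
      sub_zero]
  have hg : DifferentiableOn ℂ (coordDslope f j c) (polydisc d) :=
    differentiableOn_coordDslope (isOpen_polydisc d) hf.1 fun z hz => update_mem_polydisc hz j hc
  refine ⟨coordDslope f j c, ⟨hg, H2polyNorm2_lt_top_of_norm_le j hg.continuousOn
    (r₀ := (1 + ‖c‖) / 2) (K := 2 / (1 - ‖c‖)) (by linarith) (fun z hz hzj => ?_) hf.2⟩, hfactor⟩
  have hgap : (1 - ‖c‖) / 2 ≤ ‖z j - c‖ := by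
    linarith [norm_sub_norm_le (z j) c]
  rw [hfactor z hz, norm_mul, div_mul_eq_mul_div, le_div_iff₀ (by linarith)]
  nlinarith [norm_nonneg (coordDslope f j c z)]

/-- The division property of `H²(𝔻^d)`: if `f ∈ H²(𝔻^d)` vanishes on
`{z ∈ 𝔻^d : z_j = λ_j}`, then `f = (z_j − λ_j) g` for some `g ∈ H²(𝔻^d)`. -/
theorem stmt13 (d : ℕ) (hd : 1 ≤ d) (lam : Fin d → ℂ) (hlam : lam ∈ polydisc d)
    (j : Fin d) (f : (Fin d → ℂ) → ℂ) (hf : MemH2poly d f)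
    (hvan : ∀ z ∈ polydisc d, z j = lam j → f z = 0) :
    ∃ g : (Fin d → ℂ) → ℂ, MemH2poly d g ∧
      ∀ z ∈ polydisc d, f z = (z j - lam j) * g z :=
  stmt13_general d lam hlam j f hf hvan
end
end

section
/- Let 𝓗 be a linear subspace of the space of holomorphic functions on 𝔻² containing the constant functions and having the division property: for every j ∈ {1,2}, every λ ∈ 𝔻 and every holomorphic h on 𝔻², if z ↦ (z_j − λ)h(z) belongs to 𝓗 then h ∈ 𝓗. Let w = (w₁,w₂) ∈ 𝔻² and suppose that for every f ∈ 𝓗, at least one of the functions (z₁,z₂) ↦ f(z₁,w₂) and (z₁,z₂) ↦ f(w₁,z₂) belongs to 𝓗. Then Gleason's problem can be solved for 𝓗 over {w}: for every f ∈ 𝓗 there exist g₁, g₂ ∈ 𝓗 with f(z) = f(w) + (z₁ − w₁)g₁(z) + (z₂ − w₂)g₂(z) for all z ∈ 𝔻². -/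
/-!
Fix `f ∈ 𝓗`; by symmetry assume that the slice `f(·, w₂)` lies in `𝓗`. Then `f - f(·, w₂)`
vanishes on `{z₂ = w₂}`, and `f(·, w₂) - f(w)` vanishes on `{z₁ = w₁}`. Each is the product of
`z₂ - w₂` (resp. `z₁ - w₁`) with its difference quotient in that variable, and the division property
puts these quotients in `𝓗` as soon as they are holomorphic on `𝔻²`.

Holomorphy of `z ↦ dslope (u(z₁, ·)) b z₂` away from `z₂ = b` is clear. Near `z₂ = b`, the Cauchy
formula writes it as `(2πi)⁻¹ ∮ (t - z₂)⁻¹ (u(z₁, t) - u(z₁, b)) / (t - b) dt`; the kernel and the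
integrand are holomorphic maps of `z₂`, resp. `z₁`, into the Banach algebra `C(S, ℂ)` of continuous
functions on the circle `S`, so the integral is the image of their product under a continuous linear
map and is jointly holomorphic. A continuous map into `C(S, ℂ)` that is holomorphic pointwise is
holomorphic because it equals its own (Banach-valued) Cauchy integral.
-/

open Complex Set

noncomputable section

open Metric Filter Topology
open scoped NNReal Real

theorem ContinuousOn.exists_continuousOn_continuousMap {X Y Z : Type*} [TopologicalSpace X]
    [TopologicalSpace Y] [TopologicalSpace Z] [Zero Z] {U : Set Y} {f : Y → X → Z}
    (hf : ContinuousOn (Function.uncurry f) (U ×ˢ univ)) :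
    ∃ F : Y → C(X, Z), ContinuousOn F U ∧ ∀ z ∈ U, ∀ x, F z x = f z x := by
  classical
  let k : C(U × X, Z) := ⟨fun p => f p.1 p.2,
    hf.comp_continuous (continuous_subtype_val.prodMap continuous_id) fun p => ⟨p.1.2, trivial⟩⟩
  refine ⟨fun z => if h : z ∈ U then k.curry ⟨z, h⟩ else 0, ?_,
    fun z hz x => by simp [hz, k]; rfl⟩
  rw [continuousOn_iff_continuous_domRestrict]
  exact k.curry.continuous.congr fun z => by simp

section ContinuousMap

variable {X : Type*} [TopologicalSpace X] [CompactSpace X]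
  {E : Type*} [NormedAddCommGroup E] [NormedSpace ℂ E] [CompleteSpace E]

theorem ContinuousMap.circleIntegral_apply {F : ℂ → C(X, E)} {c : ℂ} {R : ℝ}
    (hF : CircleIntegrable F c R) (x : X) :
    (∮ z in C(c, R), F z) x = ∮ z in C(c, R), F z x :=
  ((ContinuousMap.evalCLM ℂ x).intervalIntegral_comp_comm ((circleIntegrable_iff R).1 hF)).symm

theorem ContinuousMap.differentiableOn_of_forall_apply {F : ℂ → C(X, E)} {U : Set ℂ}
    (hU : IsOpen U) (hc : ContinuousOn F U) (hd : ∀ x, DifferentiableOn ℂ (fun z => F z x) U) :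
    DifferentiableOn ℂ F U := by
  intro z hz
  obtain ⟨R, hR, hRU⟩ := nhds_basis_closedBall.mem_iff.1 (hU.mem_nhds hz)
  lift R to ℝ≥0 using hR.le
  have hsphere : sphere z R ⊆ U := sphere_subset_closedBall.trans hRU
  have hcauchy : ∀ w ∈ ball z R,
      (2 * π * I : ℂ)⁻¹ • (∮ s in C(z, R), (s - w)⁻¹ • F s) = F w := by
    intro w hw
    ext x
    have hint : CircleIntegrable (fun s => (s - w)⁻¹ • F s) z R := by
      refine ContinuousOn.circleIntegrable R.2 (ContinuousOn.fun_smul ?_ (hc.mono hsphere))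
      refine (continuousOn_id.sub continuousOn_const).inv₀ fun s hs => sub_ne_zero.2 ?_
      rintro rfl
      exact sphere_disjoint_ball.ne_of_mem hs hw rfl
    rw [ContinuousMap.smul_apply, ContinuousMap.circleIntegral_apply hint]
    exact ((hd x).diffContOnCl_ball hRU).two_pi_i_inv_smul_circleIntegral_sub_inv_smul hw
  have hps := hasFPowerSeriesOn_cauchy_integral ((hc.mono hsphere).circleIntegrable R.2)
    (by exact_mod_cast hR)
  refine (hps.hasFPowerSeriesAt.differentiableAt.congr_of_eventuallyEq ?_).differentiableWithinAt
  filter_upwards [ball_mem_nhds z hR] with w hw using (hcauchy w hw).symm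

theorem exists_differentiableOn_continuousMap {U : Set ℂ} (hU : IsOpen U) {f : ℂ → X → E}
    (hc : ContinuousOn (Function.uncurry f) (U ×ˢ univ))
    (hd : ∀ x, DifferentiableOn ℂ (f · x) U) :
    ∃ F : ℂ → C(X, E), DifferentiableOn ℂ F U ∧ ∀ z ∈ U, ∀ x, F z x = f z x := by
  obtain ⟨F, hFc, hF⟩ := hc.exists_continuousOn_continuousMap
  exact ⟨F, ContinuousMap.differentiableOn_of_forall_apply hU hFc fun x =>
    (hd x).congr fun z hz => hF z hz x, hF⟩

end ContinuousMap

theorem exists_differentiableOn_continuousMap_sub_inv (c : ℂ) (R : ℝ) :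
    ∃ Q : ℂ → C(sphere c |R|, ℂ), DifferentiableOn ℂ Q (ball c R) ∧
      ∀ w ∈ ball c R, ∀ t, Q w t = ((t : ℂ) - w)⁻¹ := by
  have hne : ∀ w ∈ ball c R, ∀ t : sphere c |R|, (t : ℂ) - w ≠ 0 := fun w hw t =>
    sub_ne_zero.2 <| sphere_disjoint_ball.ne_of_mem
      (by simpa [abs_of_pos (pos_of_mem_ball hw)] using t.2) hw
  exact exists_differentiableOn_continuousMap isOpen_ball
    (((continuous_subtype_val.comp continuous_snd).sub continuous_fst).continuousOn.inv₀
      fun p hp => hne p.1 hp.1 p.2)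
    fun t => (differentiableOn_const _ |>.sub differentiableOn_id).inv fun w hw => hne w hw t

section CircleIntegral

variable {E : Type*} [NormedAddCommGroup E] [NormedSpace ℂ E]

theorem continuous_deriv_circleMap (c : ℂ) (R : ℝ) : Continuous (deriv (circleMap c R)) := by
  rw [funext (deriv_circleMap c R)]
  exact (continuous_circleMap 0 R).mul continuous_const

variable (E) in
def circleIntegralCLM (c : ℂ) (R : ℝ) : C(sphere c |R|, E) →L[ℂ] E :=
  LinearMap.mkContinuous
    { toFun := fun φ => ∫ θ in 0..2 * π,
        deriv (circleMap c R) θ • φ ⟨circleMap c R θ, circleMap_mem_sphere' c R θ⟩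
      map_add' := fun φ ψ => by
        have hcont : ∀ φ : C(sphere c |R|, E), Continuous fun θ =>
            deriv (circleMap c R) θ • φ ⟨circleMap c R θ, circleMap_mem_sphere' c R θ⟩ :=
          fun φ => (continuous_deriv_circleMap c R).smul
            (φ.continuous.comp ((continuous_circleMap c R).subtype_mk _))
        simp only [ContinuousMap.add_apply, smul_add]
        exact intervalIntegral.integral_add ((hcont φ).intervalIntegrable _ _)
          ((hcont ψ).intervalIntegrable _ _)
      map_smul' := fun a φ => by
        simp only [ContinuousMap.smul_apply, smul_comm _ a, intervalIntegral.integral_smul,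
          RingHom.id_apply] }
    (2 * π * |R|) fun φ => by
      refine (intervalIntegral.norm_integral_le_of_norm_le_const (C := |R| * ‖φ‖)
        fun θ _ => ?_).trans_eq ?_
      · rw [norm_smul, deriv_circleMap, norm_mul, norm_circleMap_zero, norm_I, mul_one]
        gcongr
        exact φ.norm_coe_le_norm _
      · rw [sub_zero, abs_of_pos Real.two_pi_pos]
        ring

theorem circleIntegralCLM_eq_circleIntegral {c : ℂ} {R : ℝ} {φ : C(sphere c |R|, E)}
    {f : ℂ → E} (hf : ∀ t : sphere c |R|, φ t = f t) :
    circleIntegralCLM E c R φ = ∮ t in C(c, R), f t := by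
  simp only [circleIntegralCLM, LinearMap.mkContinuous_apply, LinearMap.coe_mk, AddHom.coe_mk, hf]
  rfl

theorem DifferentiableOn.dslope_eq_circleIntegral [CompleteSpace E] {f : ℂ → E} {V : Set ℂ}
    (hV : IsOpen V) (hf : DifferentiableOn ℂ f V) {b : ℂ} {r : ℝ} (hrV : closedBall b r ⊆ V)
    {w : ℂ} (hw : w ∈ ball b r) :
    dslope f b w = (2 * π * I : ℂ)⁻¹ • ∮ t in C(b, r), (t - w)⁻¹ • slope f b t := by
  have hb : b ∈ V := hrV (mem_closedBall_self (pos_of_mem_ball hw).le)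
  rw [← (((differentiableOn_dslope (hV.mem_nhds hb)).2 hf).diffContOnCl_ball
    hrV).two_pi_i_inv_smul_circleIntegral_sub_inv_smul hw]
  congr 1
  refine circleIntegral.integral_congr (pos_of_mem_ball hw).le fun t ht => ?_
  rw [dslope_of_ne _ (ne_of_mem_sphere ht (pos_of_mem_ball hw).ne')]

end CircleIntegral

section DifferenceQuotient

variable {u : ℂ × ℂ → ℂ} {U V : Set ℂ}

theorem DifferentiableOn.exists_differentiableOn_continuousMap_slope (hU : IsOpen U)
    (hu : DifferentiableOn ℂ u (U ×ˢ V)) {b : ℂ} {r : ℝ} (hr : 0 < r)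
    (hrV : closedBall b r ⊆ V) :
    ∃ S : ℂ → C(sphere b |r|, ℂ), DifferentiableOn ℂ S U ∧
      ∀ z ∈ U, ∀ t, S z t = slope (fun t => u (z, t)) b t := by
  have hsphere : ∀ t : sphere b |r|, (t : ℂ) ∈ sphere b r := fun t => by
    simpa [abs_of_pos hr] using t.2
  have htV : ∀ t : sphere b |r|, (t : ℂ) ∈ V := fun t =>
    hrV (sphere_subset_closedBall (hsphere t))
  have hb : b ∈ V := hrV (mem_closedBall_self hr.le)
  have hslice : ∀ t ∈ V, DifferentiableOn ℂ (fun z₁ => u (z₁, t)) U := fun t ht =>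
    hu.comp (differentiableOn_id.prodMk (differentiableOn_const t)) fun z₁ hz₁ => ⟨hz₁, ht⟩
  refine exists_differentiableOn_continuousMap hU ?_ fun t => ?_ <;>
    simp only [slope_def_module]
  · refine ContinuousOn.fun_smul ?_ (ContinuousOn.fun_sub ?_ ?_)
    · exact (continuous_subtype_val.comp continuous_snd).sub continuous_const
        |>.continuousOn.inv₀ fun p _ => sub_ne_zero.2 (ne_of_mem_sphere (hsphere p.2) hr.ne')
    · exact hu.continuousOn.comp (by fun_prop) fun p hp => ⟨hp.1, htV p.2⟩
    · exact (hslice b hb).continuousOn.comp continuous_fst.continuousOn fun p hp => hp.1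
  · exact ((hslice t (htV t)).fun_sub (hslice b hb)).fun_const_smul _

theorem DifferentiableOn.differentiableAt_dslope_snd (hU : IsOpen U) (hV : IsOpen V)
    (hu : DifferentiableOn ℂ u (U ×ˢ V)) {a b : ℂ} (ha : a ∈ U) (hb : b ∈ V) :
    DifferentiableAt ℂ (fun z : ℂ × ℂ => dslope (fun t => u (z.1, t)) b z.2) (a, b) := by
  obtain ⟨r, hr, hrV⟩ := nhds_basis_closedBall.mem_iff.1 (hV.mem_nhds hb)
  obtain ⟨S, hSd, hS⟩ := hu.exists_differentiableOn_continuousMap_slope hU hr hrV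
  obtain ⟨Q, hQd, hQ⟩ := exists_differentiableOn_continuousMap_sub_inv b r
  have hrep : ∀ z ∈ U ×ˢ ball b r, dslope (fun t => u (z.1, t)) b z.2 =
      (2 * π * I : ℂ)⁻¹ • circleIntegralCLM ℂ b r (Q z.2 * S z.1) := by
    rintro ⟨z₁, z₂⟩ ⟨hz₁, hz₂⟩
    have hu₁ : DifferentiableOn ℂ (fun t => u (z₁, t)) V :=
      hu.comp (differentiableOn_const z₁ |>.prodMk differentiableOn_id) fun t ht => ⟨hz₁, ht⟩
    rw [hu₁.dslope_eq_circleIntegral hV hrV hz₂, circleIntegralCLM_eq_circleIntegral]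
    intro t
    rw [ContinuousMap.mul_apply, hQ z₂ hz₂, hS z₁ hz₁, smul_eq_mul]
  have hdiff : DifferentiableAt ℂ
      (fun z : ℂ × ℂ => (2 * π * I : ℂ)⁻¹ • circleIntegralCLM ℂ b r (Q z.2 * S z.1)) (a, b) :=
    ((circleIntegralCLM ℂ b r).differentiableAt.comp _
      (((hQd.differentiableAt (ball_mem_nhds b hr)).comp _ differentiableAt_snd).mul
        ((hSd.differentiableAt (hU.mem_nhds ha)).comp _ differentiableAt_fst))).fun_const_smul _
  refine hdiff.congr_of_eventuallyEq ?_
  filter_upwards [(hU.prod isOpen_ball).mem_nhds ⟨ha, mem_ball_self hr⟩] with z hz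
  exact hrep z hz

theorem DifferentiableOn.dslope_snd (hU : IsOpen U) (hV : IsOpen V)
    (hu : DifferentiableOn ℂ u (U ×ˢ V)) {b : ℂ} (hb : b ∈ V) :
    DifferentiableOn ℂ (fun z : ℂ × ℂ => dslope (fun t => u (z.1, t)) b z.2) (U ×ˢ V) := by
  rintro ⟨a, w⟩ ⟨ha, hw⟩
  refine DifferentiableAt.differentiableWithinAt ?_
  by_cases hwb : w = b
  · subst w
    exact hu.differentiableAt_dslope_snd hU hV ha hb
  have hopen : U ×ˢ V ∈ 𝓝 (a, w) := (hU.prod hV).mem_nhds ⟨ha, hw⟩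
  have hline : DifferentiableOn ℂ (fun z : ℂ × ℂ => u (z.1, b)) (U ×ˢ V) :=
    hu.comp (differentiableOn_fst.prodMk (differentiableOn_const b)) fun z hz => ⟨hz.1, hb⟩
  have hd : DifferentiableAt ℂ (fun z : ℂ × ℂ => (z.2 - b)⁻¹ • (u z - u (z.1, b))) (a, w) :=
    ((differentiableAt_snd.sub_const b).inv (sub_ne_zero.2 hwb)).smul
      ((hu.differentiableAt hopen).sub (hline.differentiableAt hopen))
  refine hd.congr_of_eventuallyEq ?_
  filter_upwards [continuous_snd.continuousAt.eventually_ne hwb] with z hz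
  rw [dslope_of_ne _ hz, slope_def_module]

theorem DifferentiableOn.dslope_fst (hU : IsOpen U) (hV : IsOpen V)
    (hu : DifferentiableOn ℂ u (U ×ˢ V)) {b : ℂ} (hb : b ∈ U) :
    DifferentiableOn ℂ (fun z : ℂ × ℂ => dslope (fun s => u (s, z.2)) b z.1) (U ×ˢ V) := by
  have hswap : Differentiable ℂ fun z : ℂ × ℂ => (z.2, z.1) :=
    differentiable_snd.prodMk differentiable_fst
  have hu' : DifferentiableOn ℂ (fun z : ℂ × ℂ => u (z.2, z.1)) (V ×ˢ U) :=
    hu.comp hswap.differentiableOn fun z hz => ⟨hz.2, hz.1⟩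
  exact (hu'.dslope_snd hV hU hb).comp hswap.differentiableOn fun z hz => ⟨hz.2, hz.1⟩

end DifferenceQuotient

theorem bidisc_eq_ball_prod_ball : bidisc = ball (0 : ℂ) 1 ×ˢ ball (0 : ℂ) 1 := by
  ext z
  simp [bidisc]

section Division

variable {H : Submodule ℂ (ℂ × ℂ → ℂ)} {lam : ℂ} {u : ℂ × ℂ → ℂ}

theorem exists_mem_eq_add_sub_snd_mul (hhol : ∀ f ∈ H, DifferentiableOn ℂ f bidisc)
    (hdiv : ∀ lam : ℂ, ‖lam‖ < 1 → ∀ h : ℂ × ℂ → ℂ,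
      DifferentiableOn ℂ h bidisc → (fun z : ℂ × ℂ => (z.2 - lam) * h z) ∈ H → h ∈ H)
    (hlam : ‖lam‖ < 1) (hu : u ∈ H) (hslice : (fun z : ℂ × ℂ => u (z.1, lam)) ∈ H) :
    ∃ g ∈ H, ∀ z : ℂ × ℂ, u z = u (z.1, lam) + (z.2 - lam) * g z := by
  set g := fun z : ℂ × ℂ => dslope (fun t => u (z.1, t)) lam z.2
  have hg : DifferentiableOn ℂ g bidisc := by
    have := hhol u hu
    rw [bidisc_eq_ball_prod_ball] at this ⊢
    exact this.dslope_snd isOpen_ball isOpen_ball (mem_ball_zero_iff.2 hlam)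
  have hmul : (fun z : ℂ × ℂ => (z.2 - lam) * g z) = u - fun z => u (z.1, lam) :=
    funext fun z => sub_smul_dslope (fun t => u (z.1, t)) lam z.2
  refine ⟨g, hdiv lam hlam g hg (hmul ▸ H.sub_mem hu hslice), fun z => ?_⟩
  rw [congrFun hmul z, Pi.sub_apply, add_sub_cancel]

theorem exists_mem_eq_add_sub_fst_mul (hhol : ∀ f ∈ H, DifferentiableOn ℂ f bidisc)
    (hdiv : ∀ lam : ℂ, ‖lam‖ < 1 → ∀ h : ℂ × ℂ → ℂ,
      DifferentiableOn ℂ h bidisc → (fun z : ℂ × ℂ => (z.1 - lam) * h z) ∈ H → h ∈ H)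
    (hlam : ‖lam‖ < 1) (hu : u ∈ H) (hslice : (fun z : ℂ × ℂ => u (lam, z.2)) ∈ H) :
    ∃ g ∈ H, ∀ z : ℂ × ℂ, u z = u (lam, z.2) + (z.1 - lam) * g z := by
  set g := fun z : ℂ × ℂ => dslope (fun s => u (s, z.2)) lam z.1
  have hg : DifferentiableOn ℂ g bidisc := by
    have := hhol u hu
    rw [bidisc_eq_ball_prod_ball] at this ⊢
    exact this.dslope_fst isOpen_ball isOpen_ball (mem_ball_zero_iff.2 hlam)
  have hmul : (fun z : ℂ × ℂ => (z.1 - lam) * g z) = u - fun z => u (lam, z.2) :=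
    funext fun z => sub_smul_dslope (fun s => u (s, z.2)) lam z.1
  refine ⟨g, hdiv lam hlam g hg (hmul ▸ H.sub_mem hu hslice), fun z => ?_⟩
  rw [congrFun hmul z, Pi.sub_apply, add_sub_cancel]

end Division

/-- Let `𝓗` be a linear subspace of holomorphic functions on `𝔻²` containing the constants and
having the division property. If `w ∈ 𝔻²` is such that for every `f ∈ 𝓗` at least one of the
slices `f(·, w₂)`, `f(w₁, ·)` belongs to `𝓗`, then Gleason's problem can be solved for `𝓗`
over `{w}`. -/
theorem stmt16 (H : Submodule ℂ ((ℂ × ℂ) → ℂ))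
    (hhol : ∀ f ∈ H, DifferentiableOn ℂ f bidisc)
    (hconst : (fun _ : ℂ × ℂ => (1:ℂ)) ∈ H)
    (hdiv1 : ∀ lam : ℂ, ‖lam‖ < 1 → ∀ h : ℂ × ℂ → ℂ,
      DifferentiableOn ℂ h bidisc → (fun z : ℂ × ℂ => (z.1 - lam) * h z) ∈ H → h ∈ H)
    (hdiv2 : ∀ lam : ℂ, ‖lam‖ < 1 → ∀ h : ℂ × ℂ → ℂ,
      DifferentiableOn ℂ h bidisc → (fun z : ℂ × ℂ => (z.2 - lam) * h z) ∈ H → h ∈ H)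
    (w : ℂ × ℂ) (hw : w ∈ bidisc)
    (hslice : ∀ f ∈ H, (fun z : ℂ × ℂ => f (z.1, w.2)) ∈ H ∨
      (fun z : ℂ × ℂ => f (w.1, z.2)) ∈ H) :
    ∀ f ∈ H, ∃ g₁ g₂ : ℂ × ℂ → ℂ, g₁ ∈ H ∧ g₂ ∈ H ∧
      ∀ z ∈ bidisc, f z = f w + (z.1 - w.1) * g₁ z + (z.2 - w.2) * g₂ z := by
  intro f hf
  have hfw : (fun _ : ℂ × ℂ => f w) ∈ H := by
    convert H.smul_mem (f w) hconst using 1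
    ext
    simp
  rcases hslice f hf with hF | hF
  · obtain ⟨g₂, hg₂, e₂⟩ := exists_mem_eq_add_sub_snd_mul hhol hdiv2 hw.2 hf hF
    obtain ⟨g₁, hg₁, e₁⟩ := exists_mem_eq_add_sub_fst_mul hhol hdiv1 hw.1 hF hfw
    exact ⟨g₁, g₂, hg₁, hg₂, fun z _ => by linear_combination e₂ z + e₁ z⟩
  · obtain ⟨g₁, hg₁, e₁⟩ := exists_mem_eq_add_sub_fst_mul hhol hdiv1 hw.1 hf hF
    obtain ⟨g₂, hg₂, e₂⟩ := exists_mem_eq_add_sub_snd_mul hhol hdiv2 hw.2 hF hfw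
    exact ⟨g₁, g₂, hg₁, hg₂, fun z _ => by linear_combination e₁ z + e₂ z⟩
end
end

section
/- Let H be a complex Hilbert space and let T₁, T₂ be commuting bounded linear operators on H forming a toral 2-isometry, i.e., I − T_i^*T_i − T_j^*T_j + T_j^*T_i^*T_iT_j = 0 for all i, j ∈ {1,2}. Then for all nonnegative integers k, l: T₁^{*k} T₂^{*l} T₂^{l} T₁^{k} = T₁^{*k}T₁^{k} + T₂^{*l}T₂^{l} − I = k·T₁^*T₁ + l·T₂^*T₂ − (k + l − 1)·I. -/
open ContinuousLinearMap

set_option maxHeartbeats 2000000 in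
/-- If `(T₁, T₂)` is a commuting toral `2`-isometry on a complex Hilbert space, then for all
`k, l ≥ 0`: `T₁^{*k} T₂^{*l} T₂^l T₁^k = T₁^{*k}T₁^k + T₂^{*l}T₂^l − I
= k T₁^*T₁ + l T₂^*T₂ − (k + l − 1) I`. -/
theorem stmt18 {H : Type*} [NormedAddCommGroup H] [InnerProductSpace ℂ H] [CompleteSpace H]
    (T₁ T₂ : H →L[ℂ] H) (hcomm : T₁ * T₂ = T₂ * T₁)
    (htoral : ∀ S T : H →L[ℂ] H, S ∈ ({T₁, T₂} : Set (H →L[ℂ] H)) →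
      T ∈ ({T₁, T₂} : Set (H →L[ℂ] H)) →
      (1 : H →L[ℂ] H) - adjoint S * S - adjoint T * T
        + adjoint T * adjoint S * S * T = 0)
    (k l : ℕ) :
    (adjoint T₁) ^ k * (adjoint T₂) ^ l * T₂ ^ l * T₁ ^ k
        = (adjoint T₁) ^ k * T₁ ^ k + (adjoint T₂) ^ l * T₂ ^ l - 1 ∧
    (adjoint T₁) ^ k * (adjoint T₂) ^ l * T₂ ^ l * T₁ ^ k
        = (k : ℂ) • (adjoint T₁ * T₁) + (l : ℂ) • (adjoint T₂ * T₂)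
          - ((k : ℂ) + (l : ℂ) - 1) • (1 : H →L[ℂ] H) := by
  have hmem₁ : T₁ ∈ ({T₁, T₂} : Set (H →L[ℂ] H)) := Or.inl rfl
  have hmem₂ : T₂ ∈ ({T₁, T₂} : Set (H →L[ℂ] H)) := Or.inr rfl
  have h11 : adjoint T₁ * (adjoint T₁ * T₁) * T₁
      = adjoint T₁ * T₁ + adjoint T₁ * T₁ - 1 := by
    have h := htoral T₁ T₁ hmem₁ hmem₁
    rw [← sub_eq_zero, ← h]; noncomm_ring
  have h22 : adjoint T₂ * (adjoint T₂ * T₂) * T₂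
      = adjoint T₂ * T₂ + adjoint T₂ * T₂ - 1 := by
    have h := htoral T₂ T₂ hmem₂ hmem₂
    rw [← sub_eq_zero, ← h]; noncomm_ring
  have h12 : adjoint T₂ * (adjoint T₁ * T₁) * T₂
      = adjoint T₁ * T₁ + adjoint T₂ * T₂ - 1 := by
    have h := htoral T₁ T₂ hmem₁ hmem₂
    rw [← sub_eq_zero, ← h]; noncomm_ring
  have haux1 : adjoint T₁ * (adjoint T₁ * T₁ - 1) * T₁ = adjoint T₁ * T₁ - 1 := by
    rw [mul_sub, sub_mul, h11]; noncomm_ring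
  have haux2 : adjoint T₂ * (adjoint T₂ * T₂ - 1) * T₂ = adjoint T₂ * T₂ - 1 := by
    rw [mul_sub, sub_mul, h22]; noncomm_ring
  have hQ1 : ∀ m : ℕ, (adjoint T₁) ^ m * T₁ ^ m
      = 1 + (m : ℂ) • (adjoint T₁ * T₁ - 1) := by
    intro m
    induction m with
    | zero => simp
    | succ n ih =>
      calc (adjoint T₁) ^ (n+1) * T₁ ^ (n+1)
          = adjoint T₁ * ((adjoint T₁) ^ n * T₁ ^ n) * T₁ := by
            rw [pow_succ' (adjoint T₁), pow_succ T₁]; noncomm_ring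
        _ = adjoint T₁ * (1 + (n : ℂ) • (adjoint T₁ * T₁ - 1)) * T₁ := by rw [ih]
        _ = adjoint T₁ * T₁ + (n : ℂ) • (adjoint T₁ * (adjoint T₁ * T₁ - 1) * T₁) := by
            simp only [mul_add, add_mul, mul_one, mul_smul_comm, smul_mul_assoc]
        _ = adjoint T₁ * T₁ + (n : ℂ) • (adjoint T₁ * T₁ - 1) := by rw [haux1]
        _ = 1 + ((n + 1 : ℕ) : ℂ) • (adjoint T₁ * T₁ - 1) := by push_cast; module
  have hQ2 : ∀ m : ℕ, (adjoint T₂) ^ m * T₂ ^ m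
      = 1 + (m : ℂ) • (adjoint T₂ * T₂ - 1) := by
    intro m
    induction m with
    | zero => simp
    | succ n ih =>
      calc (adjoint T₂) ^ (n+1) * T₂ ^ (n+1)
          = adjoint T₂ * ((adjoint T₂) ^ n * T₂ ^ n) * T₂ := by
            rw [pow_succ' (adjoint T₂), pow_succ T₂]; noncomm_ring
        _ = adjoint T₂ * (1 + (n : ℂ) • (adjoint T₂ * T₂ - 1)) * T₂ := by rw [ih]
        _ = adjoint T₂ * T₂ + (n : ℂ) • (adjoint T₂ * (adjoint T₂ * T₂ - 1) * T₂) := by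
            simp only [mul_add, add_mul, mul_one, mul_smul_comm, smul_mul_assoc]
        _ = adjoint T₂ * T₂ + (n : ℂ) • (adjoint T₂ * T₂ - 1) := by rw [haux2]
        _ = 1 + ((n + 1 : ℕ) : ℂ) • (adjoint T₂ * T₂ - 1) := by push_cast; module
  -- conjugation of A₁ by powers of T₂
  have haux12 : adjoint T₂ * (adjoint T₁ * T₁ - 1) * T₂ = adjoint T₁ * T₁ - 1 := by
    rw [mul_sub, sub_mul, h12]; noncomm_ring
  have hMix : ∀ m : ℕ, (adjoint T₂) ^ m * (adjoint T₁ * T₁ - 1) * T₂ ^ m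
      = (adjoint T₁ * T₁ - 1) := by
    intro m
    induction m with
    | zero => simp
    | succ n ih =>
      calc (adjoint T₂) ^ (n+1) * (adjoint T₁ * T₁ - 1) * T₂ ^ (n+1)
          = (adjoint T₂) ^ n * (adjoint T₂ * (adjoint T₁ * T₁ - 1) * T₂) * T₂ ^ n := by
            rw [pow_succ (adjoint T₂), pow_succ' T₂]; noncomm_ring
        _ = (adjoint T₂) ^ n * (adjoint T₁ * T₁ - 1) * T₂ ^ n := by rw [haux12]
        _ = adjoint T₁ * T₁ - 1 := ih
  -- commutation of powers
  have hc1 : Commute T₁ T₂ := hcomm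
  have hc2 : Commute (adjoint T₂) (adjoint T₁) := by
    simpa only [star_eq_adjoint] using (Commute.star_star (hcomm.symm : Commute T₂ T₁))
  have key : (adjoint T₁) ^ k * (adjoint T₂) ^ l * T₂ ^ l * T₁ ^ k
      = 1 + (k : ℂ) • (adjoint T₁ * T₁ - 1) + (l : ℂ) • (adjoint T₂ * T₂ - 1) := by
    calc (adjoint T₁) ^ k * (adjoint T₂) ^ l * T₂ ^ l * T₁ ^ k
        = (adjoint T₂) ^ l * ((adjoint T₁) ^ k * T₁ ^ k) * T₂ ^ l := by
          conv_lhs => rw [← (hc2.pow_pow l k).eq]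
          simp only [mul_assoc]
          rw [← (hc1.pow_pow k l).eq]
      _ = (adjoint T₂) ^ l * (1 + (k : ℂ) • (adjoint T₁ * T₁ - 1)) * T₂ ^ l := by
          rw [hQ1 k]
      _ = (adjoint T₂) ^ l * T₂ ^ l
            + (k : ℂ) • ((adjoint T₂) ^ l * (adjoint T₁ * T₁ - 1) * T₂ ^ l) := by
          simp only [mul_add, add_mul, mul_one, mul_smul_comm, smul_mul_assoc]
      _ = 1 + (l : ℂ) • (adjoint T₂ * T₂ - 1) + (k : ℂ) • (adjoint T₁ * T₁ - 1) := by
          rw [hQ2 l, hMix l]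
      _ = 1 + (k : ℂ) • (adjoint T₁ * T₁ - 1) + (l : ℂ) • (adjoint T₂ * T₂ - 1) := by
          module
  constructor
  · rw [key, hQ1 k, hQ2 l]; module
  · rw [key]; module
end

section
/- Let H be a complex Hilbert space and let (T₁,T₂) be a commuting pair of bounded linear operators on H forming a toral 2-isometry. Let f₀ ∈ H satisfy T₁^*f₀ = 0 and T₂^*f₀ = 0, and assume that ⟨T₁^m f₀, T₁^p T₂^q f₀⟩ = 0 for all integers q ≥ 1 and m, p ≥ 0, and ⟨T₂^n f₀, T₁^p T₂^q f₀⟩ = 0 for all integers p ≥ 1 and n, q ≥ 0. Then for all nonnegative integers m, n, p, q: ⟨T₁^m T₂^n f₀, T₁^p T₂^q f₀⟩ equals 0 if m ≠ p and n ≠ q; equals ⟨T₂^n f₀, T₂^q f₀⟩ if m = p and n ≠ q; equals ⟨T₁^m f₀, T₁^p f₀⟩ if m ≠ p and n = q; and equals ‖T₁^m f₀‖² + ‖T₂^n f₀‖² − ‖f₀‖² if m = p and n = q. -/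
/-!
The mixed toral identity `T₂^*T₁^*T₁T₂ = T₁^*T₁ + T₂^*T₂ - I` turns into the recurrence
`G(m+1,n+1,p+1,q+1) = G(m+1,n,p+1,q) + G(m,n+1,p,q+1) - G(m,n,p,q)` for the moments
`G(m,n,p,q) = ⟨T₁^m T₂^n f₀, T₁^p T₂^q f₀⟩`, and such a recurrence is determined by its values
where one index vanishes. The closed form satisfies the same recurrence, and on that boundary
the two agree because `f₀ ∈ ker T₁^* ∩ ker T₂^*` and by the orthogonality hypotheses; conjugate
symmetry and the swap `T₁ ↔ T₂` reduce the four boundary faces to the face `n = 0`.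
-/

open ContinuousLinearMap

theorem eq_of_recurrence_of_boundary {α : Type*} [AddGroup α] {F G : ℕ → ℕ → ℕ → ℕ → α}
    (hF : ∀ m n p q, F (m + 1) (n + 1) (p + 1) (q + 1)
      = F (m + 1) n (p + 1) q + F m (n + 1) p (q + 1) - F m n p q)
    (hG : ∀ m n p q, G (m + 1) (n + 1) (p + 1) (q + 1)
      = G (m + 1) n (p + 1) q + G m (n + 1) p (q + 1) - G m n p q)
    (hbdry : ∀ m n p q, m = 0 ∨ n = 0 ∨ p = 0 ∨ q = 0 → F m n p q = G m n p q)
    (m n p q : ℕ) : F m n p q = G m n p q := by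
  induction m generalizing n p q with
  | zero => exact hbdry _ _ _ _ (by simp)
  | succ m ihm =>
    induction n generalizing p q with
    | zero => exact hbdry _ _ _ _ (by simp)
    | succ n ihn =>
      rcases p with _ | p
      · exact hbdry _ _ _ _ (by simp)
      rcases q with _ | q
      · exact hbdry _ _ _ _ (by simp)
      rw [hF, hG, ihn, ihm, ihm]

section JointMoments

variable {𝕜 H : Type*} [RCLike 𝕜] [NormedAddCommGroup H] [InnerProductSpace 𝕜 H]

local notation "⟪" x ", " y "⟫" => @inner 𝕜 _ _ x y

theorem inner_apply_apply_of_toral [CompleteSpace H] {S T : H →L[𝕜] H}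
    (h : 1 - adjoint S * S - adjoint T * T + adjoint T * adjoint S * S * T = 0) (x y : H) :
    ⟪S (T x), S (T y)⟫ = ⟪S x, S y⟫ + ⟪T x, T y⟫ - ⟪x, y⟫ := by
  have hy := congr(⟪x, $h y⟫)
  simp only [add_apply, sub_apply, mul_apply_eq_comp, one_apply_eq_self, zero_apply,
    inner_add_right, inner_sub_right, inner_zero_right, adjoint_inner_right] at hy
  linear_combination hy

theorem inner_pow_apply_eq_zero [CompleteSpace H] {T : H →L[𝕜] H} {x : H}
    (hx : adjoint T x = 0) {k : ℕ} (hk : k ≠ 0) (y : H) : ⟪x, (T ^ k) y⟫ = 0 := by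
  obtain ⟨k, rfl⟩ := Nat.exists_eq_succ_of_ne_zero hk
  rw [pow_succ', mul_apply_eq_comp, ← adjoint_inner_left, hx, inner_zero_left]

noncomputable def jointMoment (T₁ T₂ : H →L[𝕜] H) (f : H) (m n p q : ℕ) : 𝕜 :=
  ⟪(T₁ ^ m * T₂ ^ n) f, (T₁ ^ p * T₂ ^ q) f⟫

noncomputable def jointMomentFormula (T₁ T₂ : H →L[𝕜] H) (f : H) (m n p q : ℕ) : 𝕜 :=
  (if n = q then ⟪(T₁ ^ m) f, (T₁ ^ p) f⟫ else 0) + (if m = p then ⟪(T₂ ^ n) f, (T₂ ^ q) f⟫ else 0)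
    - if m = p ∧ n = q then ⟪f, f⟫ else 0

variable {T₁ T₂ : H →L[𝕜] H} {f : H}

theorem jointMoment_succ_succ [CompleteSpace H] (hc : Commute T₁ T₂)
    (htoral : 1 - adjoint T₁ * T₁ - adjoint T₂ * T₂ + adjoint T₂ * adjoint T₁ * T₁ * T₂ = 0)
    (m n p q : ℕ) :
    jointMoment T₁ T₂ f (m + 1) (n + 1) (p + 1) (q + 1)
      = jointMoment T₁ T₂ f (m + 1) n (p + 1) q + jointMoment T₁ T₂ f m (n + 1) p (q + 1)
        - jointMoment T₁ T₂ f m n p q := by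
  have h₁ (i j : ℕ) : (T₁ ^ (i + 1) * T₂ ^ j) f = T₁ ((T₁ ^ i * T₂ ^ j) f) := by
    rw [pow_succ', mul_assoc, mul_apply_eq_comp]
  have h₂ (i j : ℕ) : (T₁ ^ i * T₂ ^ (j + 1)) f = T₂ ((T₁ ^ i * T₂ ^ j) f) := by
    rw [pow_succ', (hc.pow_left i).left_comm, mul_apply_eq_comp]
  simp only [jointMoment, h₁, h₂, inner_apply_apply_of_toral htoral]

theorem jointMomentFormula_succ_succ (m n p q : ℕ) :
    jointMomentFormula T₁ T₂ f (m + 1) (n + 1) (p + 1) (q + 1)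
      = jointMomentFormula T₁ T₂ f (m + 1) n (p + 1) q
        + jointMomentFormula T₁ T₂ f m (n + 1) p (q + 1) - jointMomentFormula T₁ T₂ f m n p q := by
  simp only [jointMomentFormula, add_left_inj]
  split_ifs <;> simp_all; ring

theorem conj_jointMoment (m n p q : ℕ) :
    starRingEnd 𝕜 (jointMoment T₁ T₂ f m n p q) = jointMoment T₁ T₂ f p q m n :=
  inner_conj_symm _ _

theorem conj_jointMomentFormula (m n p q : ℕ) :
    starRingEnd 𝕜 (jointMomentFormula T₁ T₂ f m n p q) = jointMomentFormula T₁ T₂ f p q m n := by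
  simp only [jointMomentFormula, map_sub, map_add, apply_ite (starRingEnd 𝕜), inner_conj_symm,
    map_zero, eq_comm (a := m), eq_comm (a := n)]

theorem jointMoment_swap (hc : Commute T₁ T₂) (m n p q : ℕ) :
    jointMoment T₂ T₁ f n m q p = jointMoment T₁ T₂ f m n p q := by
  simp only [jointMoment, ((hc.pow_pow _ _).eq)]

theorem jointMomentFormula_swap (m n p q : ℕ) :
    jointMomentFormula T₂ T₁ f n m q p = jointMomentFormula T₁ T₂ f m n p q := by
  simp only [jointMomentFormula, add_comm, and_comm]

theorem jointMoment_eq_jointMomentFormula_zero_snd [CompleteSpace H] (hf : adjoint T₂ f = 0)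
    (horth : ∀ q m p : ℕ, 1 ≤ q → ⟪(T₁ ^ m) f, (T₁ ^ p * T₂ ^ q) f⟫ = 0) (m p q : ℕ) :
    jointMoment T₁ T₂ f m 0 p q = jointMomentFormula T₁ T₂ f m 0 p q := by
  rcases Nat.eq_zero_or_pos q with rfl | hq
  · simp [jointMoment, jointMomentFormula]
  · have hf_orth : ⟪f, (T₂ ^ q) f⟫ = 0 := inner_pow_apply_eq_zero hf hq.ne' f
    simp only [jointMoment, jointMomentFormula, pow_zero, mul_one, one_apply_eq_self,
      horth q m p hq, hf_orth, hq.ne, and_false, ite_self, if_false, add_zero, sub_zero]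

theorem jointMoment_eq_jointMomentFormula [CompleteSpace H] (hc : Commute T₁ T₂)
    (htoral : 1 - adjoint T₁ * T₁ - adjoint T₂ * T₂ + adjoint T₂ * adjoint T₁ * T₁ * T₂ = 0)
    (hf₁ : adjoint T₁ f = 0) (hf₂ : adjoint T₂ f = 0)
    (horth₁ : ∀ q m p : ℕ, 1 ≤ q → ⟪(T₁ ^ m) f, (T₁ ^ p * T₂ ^ q) f⟫ = 0)
    (horth₂ : ∀ p n q : ℕ, 1 ≤ p → ⟪(T₂ ^ n) f, (T₁ ^ p * T₂ ^ q) f⟫ = 0) (m n p q : ℕ) :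
    jointMoment T₁ T₂ f m n p q = jointMomentFormula T₁ T₂ f m n p q := by
  have hbdry_left (m n p q : ℕ) (h : m = 0 ∨ n = 0) :
      jointMoment T₁ T₂ f m n p q = jointMomentFormula T₁ T₂ f m n p q := by
    rcases h with rfl | rfl
    · rw [← jointMoment_swap hc, ← jointMomentFormula_swap]
      refine jointMoment_eq_jointMomentFormula_zero_snd hf₁ (fun p n q hp => ?_) n q p
      rw [← (hc.pow_pow p q).eq]
      exact horth₂ p n q hp
    · exact jointMoment_eq_jointMomentFormula_zero_snd hf₂ horth₁ m p q
  refine eq_of_recurrence_of_boundary (jointMoment_succ_succ hc htoral)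
    jointMomentFormula_succ_succ (fun m n p q h => ?_) m n p q
  rcases or_assoc.mpr h with h | h
  · exact hbdry_left m n p q h
  · rw [← conj_jointMoment, ← conj_jointMomentFormula, hbdry_left p q m n h]

end JointMoments

/-- Let `(T₁,T₂)` be a commuting toral `2`-isometry on a complex Hilbert space and let
`f₀ ∈ ker T₁^* ∩ ker T₂^*` satisfy `⟨T₁^m f₀, T₁^p T₂^q f₀⟩ = 0` for `q ≥ 1`, `m, p ≥ 0` and
`⟨T₂^n f₀, T₁^p T₂^q f₀⟩ = 0` for `p ≥ 1`, `n, q ≥ 0`. Then `⟨T₁^m T₂^n f₀, T₁^p T₂^q f₀⟩`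
equals `0` if `m ≠ p, n ≠ q`; `⟨T₂^n f₀, T₂^q f₀⟩` if `m = p, n ≠ q`; `⟨T₁^m f₀, T₁^p f₀⟩`
if `m ≠ p, n = q`; and `‖T₁^m f₀‖² + ‖T₂^n f₀‖² − ‖f₀‖²` if `m = p, n = q`. -/
theorem stmt19 {H : Type*} [NormedAddCommGroup H] [InnerProductSpace ℂ H] [CompleteSpace H]
    (T₁ T₂ : H →L[ℂ] H) (hcomm : T₁ * T₂ = T₂ * T₁)
    (htoral : ∀ S T : H →L[ℂ] H, S ∈ ({T₁, T₂} : Set (H →L[ℂ] H)) →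
      T ∈ ({T₁, T₂} : Set (H →L[ℂ] H)) →
      (1 : H →L[ℂ] H) - adjoint S * S - adjoint T * T
        + adjoint T * adjoint S * S * T = 0)
    (f₀ : H) (hf₁ : adjoint T₁ f₀ = 0) (hf₂ : adjoint T₂ f₀ = 0)
    (horth₁ : ∀ q m p : ℕ, 1 ≤ q →
      (inner ℂ ((T₁ ^ m) f₀) (((T₁ ^ p) * (T₂ ^ q)) f₀) : ℂ) = 0)
    (horth₂ : ∀ p n q : ℕ, 1 ≤ p →
      (inner ℂ ((T₂ ^ n) f₀) (((T₁ ^ p) * (T₂ ^ q)) f₀) : ℂ) = 0)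
    (m n p q : ℕ) :
    (m ≠ p → n ≠ q →
      (inner ℂ (((T₁ ^ m) * (T₂ ^ n)) f₀) (((T₁ ^ p) * (T₂ ^ q)) f₀) : ℂ) = 0) ∧
    (m = p → n ≠ q →
      (inner ℂ (((T₁ ^ m) * (T₂ ^ n)) f₀) (((T₁ ^ p) * (T₂ ^ q)) f₀) : ℂ)
        = (inner ℂ ((T₂ ^ n) f₀) ((T₂ ^ q) f₀) : ℂ)) ∧
    (m ≠ p → n = q →
      (inner ℂ (((T₁ ^ m) * (T₂ ^ n)) f₀) (((T₁ ^ p) * (T₂ ^ q)) f₀) : ℂ)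
        = (inner ℂ ((T₁ ^ m) f₀) ((T₁ ^ p) f₀) : ℂ)) ∧
    (m = p → n = q →
      (inner ℂ (((T₁ ^ m) * (T₂ ^ n)) f₀) (((T₁ ^ p) * (T₂ ^ q)) f₀) : ℂ)
        = ((‖(T₁ ^ m) f₀‖ ^ 2 + ‖(T₂ ^ n) f₀‖ ^ 2 - ‖f₀‖ ^ 2 : ℝ) : ℂ)) := by
  have hmain := jointMoment_eq_jointMomentFormula (hcomm : Commute T₁ T₂)
    (htoral T₁ T₂ (by simp) (by simp)) hf₁ hf₂ horth₁ horth₂ m n p q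
  rw [jointMoment, jointMomentFormula] at hmain
  refine ⟨fun hmp hnq => ?_, fun hmp hnq => ?_, fun hmp hnq => ?_, fun hmp hnq => ?_⟩ <;>
    rw [hmain]
  · simp only [hmp, hnq, if_false, and_false, add_zero, sub_zero]
  · simp only [hmp, hnq, if_true, if_false, and_false, zero_add, sub_zero]
  · simp only [hmp, hnq, if_true, if_false, false_and, add_zero, sub_zero]
  · subst hmp hnq
    simp only [and_self, if_true, inner_self_eq_norm_sq_to_K]
    push_cast
    rfl
end
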